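/- arXiv:1909.05000 — 10 statements merged into one kernel-verified Lean document; each statement's English description precedes it below -/
import Mathlib

section
/- Let A be a unital C*-algebra and let α, γ ∈ A satisfy the SU_q(2) relations. Then αγ* = q·γ*α. -/
open scoped ComplexConjugate

/-- Elements `α`, `γ` of a unital C*-algebra satisfy the SU_q(2) relations. -/
def SUq2Rel {A : Type*} [Ring A] [StarRing A] [Module ℂ A] (q : ℂ) (α γ : A) : Prop :=
  star α * α + star γ * γ = 1 ∧
  α * star α + ((‖q‖ : ℂ) ^ 2) • (star γ * γ) = 1 ∧
  α * γ = conj q • (γ * α) ∧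
  γ * star γ = star γ * γ

theorem stmt0 (q : ℂ) (hq0 : 0 < ‖q‖) (hq1 : ‖q‖ < 1)
    {A : Type*} [NormedRing A] [StarRing A] [CStarRing A] [NormedAlgebra ℂ A]
    [StarModule ℂ A] [CompleteSpace A]
    (α γ : A) (h : SUq2Rel q α γ) :
    α * star γ = q • (star γ * α) := by
  obtain ⟨h1, h2, h3, h4⟩ := h
  set b : A := star γ * γ with hbdef
  have hαα : star α * α = 1 - b := by
    exact eq_sub_of_add_eq h1
  have h2' : ((‖q‖ : ℂ) ^ 2) • b = 1 - α * star α :=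
    eq_sub_of_add_eq' h2
  -- star of h3
  have hstar3 : star γ * star α = q • (star α * star γ) := by
    have := congrArg star h3
    simpa [star_mul, star_smul, Complex.conj_conj] using this
  have hq2 : conj q * q = ((‖q‖ : ℂ) ^ 2) := by
    rw [mul_comm, Complex.mul_conj, ← Complex.sq_norm]
    push_cast
    ring
  -- the four product identities
  have t1 : (γ * star α) * (α * star γ) = b - b * b := by
    calc (γ * star α) * (α * star γ) = γ * (star α * α) * star γ := by noncomm_ring
    _ = γ * (1 - b) * star γ := by rw [hαα]
    _ = γ * star γ - γ * (star γ * γ) * star γ := by rw [hbdef]; noncomm_ring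
    _ = (γ * star γ) - (γ * star γ) * (γ * star γ) := by noncomm_ring
    _ = b - b * b := by rw [h4]
  have t2 : (γ * star α) * (q • (star γ * α)) = b - b * b := by
    calc (γ * star α) * (q • (star γ * α))
        = γ * (q • (star α * star γ)) * α := by
          simp only [mul_smul_comm, smul_mul_assoc, mul_assoc]
    _ = γ * (star γ * star α) * α := by rw [← hstar3]
    _ = (γ * star γ) * (star α * α) := by noncomm_ring
    _ = b * (1 - b) := by rw [h4, hαα]
    _ = b - b * b := by noncomm_ring
  have t3 : ((conj q) • (star α * γ)) * (α * star γ) = b - b * b := by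
    calc ((conj q) • (star α * γ)) * (α * star γ)
        = star α * ((conj q) • (γ * α)) * star γ := by
          simp only [mul_smul_comm, smul_mul_assoc, mul_assoc]
    _ = star α * (α * γ) * star γ := by rw [← h3]
    _ = (star α * α) * (γ * star γ) := by noncomm_ring
    _ = (1 - b) * b := by rw [h4, hαα]
    _ = b - b * b := by noncomm_ring
  have t4 : ((conj q) • (star α * γ)) * (q • (star γ * α)) = b - b * b := by
    calc ((conj q) • (star α * γ)) * (q • (star γ * α))
        = star α * ((conj q * q) • (γ * star γ)) * α := by
          simp only [mul_smul_comm, smul_mul_assoc, smul_smul, mul_assoc]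
          rw [mul_comm q (conj q)]
    _ = star α * (((‖q‖ : ℂ) ^ 2) • b) * α := by rw [hq2, h4]
    _ = star α * (1 - α * star α) * α := by rw [h2']
    _ = (star α * α) - (star α * α) * (star α * α) := by noncomm_ring
    _ = (1 - b) - (1 - b) * (1 - b) := by rw [hαα]
    _ = b - b * b := by noncomm_ring
  -- T*T = 0
  have key : star (α * star γ - q • (star γ * α)) * (α * star γ - q • (star γ * α)) = 0 := by
    have hstarT : star (α * star γ - q • (star γ * α))
        = γ * star α - (conj q) • (star α * γ) := by
      simp [star_sub, star_mul, star_smul, Complex.star_def]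
    rw [hstarT, sub_mul, mul_sub, mul_sub, t1, t2, t3, t4]
    abel
  have := CStarRing.star_mul_self_eq_zero_iff
    (α * star γ - q • (star γ * α)) |>.mp key
  exact sub_eq_zero.mp this
end

section
/- Let A be a unital C*-algebra and let α, γ ∈ A satisfy the SU_q(2) relations. For n ∈ ℤ and k, l ∈ ℕ define a_{n,k,l} = αⁿγᵏ(γ*)ˡ if n ≥ 0 and a_{n,k,l} = (α*)^{−n}γᵏ(γ*)ˡ if n < 0. Then the topological closure of the ℂ-linear span of the family {a_{n,k,l} : n ∈ ℤ, k, l ∈ ℕ} equals the topological closure of the star-subalgebra of A generated by {α, γ}. In particular, the span of this family is a unital *-subalgebra dense in the closed *-subalgebra generated by α and γ. -/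
open scoped ComplexConjugate

/-- The element `a_{n,k,l}`: `α^n γ^k (γ*)^l` for `n ≥ 0`, `(α*)^{-n} γ^k (γ*)^l` for `n < 0`. -/
noncomputable def aGen {A : Type*} [Ring A] [StarRing A] (α γ : A) (n : ℤ) (k l : ℕ) : A :=
  (if 0 ≤ n then α ^ n.toNat else star α ^ (-n).toNat) * γ ^ k * star γ ^ l

/-- The linear span of the family `a_{n,k,l}`. -/
noncomputable def aSpan {A : Type*} [Ring A] [StarRing A] [Module ℂ A] (α γ : A) :
    Submodule ℂ A :=
  Submodule.span ℂ (Set.range fun p : ℤ × ℕ × ℕ => aGen α γ p.1 p.2.1 p.2.2)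

/-!
The relations force the fifth relation `α γ* = q γ* α` of `SU_q(2)`: for `x = α γ* - q γ* α`
each of the four terms of `x* x` equals `±(c - c²)` with `c = γ* γ`, so `x* x = 0` and `x = 0`
by the C*-identity. With all four commutation relations, moving `α` or `α*` past `γ^k γ*^l`
costs only a scalar, while `α* α = 1 - c` and `α α* = 1 - |q|² c` rewrite `α*^(m+1) α` and
`α^(m+1) α*` through shorter words. Hence the span of the `a_{n,k,l}` contains `1` and is stable
under right multiplication by `α, α*, γ, γ*`, so it already equals the *-algebra generated by
`α` and `γ`.
-/

section ScalarCommutation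

variable {R A : Type*} [CommSemiring R] [Semiring A] [Algebra R A]

theorem pow_mul_eq_smul_mul_pow {x y : A} {s : R} (h : y * x = s • (x * y)) (k : ℕ) :
    y ^ k * x = s ^ k • (x * y ^ k) := by
  induction k with
  | zero => simp
  | succ k ih =>
    rw [pow_succ, mul_assoc, h, mul_smul_comm, ← mul_assoc, ih, smul_mul_assoc, smul_smul,
      mul_assoc, ← pow_succ, ← pow_succ']

theorem pow_mul_pow_mul_eq_smul_mul {x y z : A} {s t : R} (hy : y * x = s • (x * y))
    (hz : z * x = t • (x * z)) (k l : ℕ) :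
    y ^ k * z ^ l * x = (s ^ k * t ^ l) • (x * (y ^ k * z ^ l)) := by
  rw [mul_assoc, pow_mul_eq_smul_mul_pow hz, mul_smul_comm, ← mul_assoc,
    pow_mul_eq_smul_mul_pow hy, smul_mul_assoc, smul_smul, mul_comm (t ^ l), mul_assoc]

end ScalarCommutation

namespace SUq2Rel

section Algebraic

variable {A : Type*} [Ring A] [StarRing A] [Algebra ℂ A] {q : ℂ} {α γ : A}
  (h : SUq2Rel q α γ)
include h

theorem star_alpha_mul_alpha : star α * α = 1 - star γ * γ :=
  eq_sub_of_add_eq h.1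

theorem alpha_mul_star_alpha : α * star α = 1 - (q * conj q) • (star γ * γ) := by
  rw [Complex.mul_conj, Complex.normSq_eq_norm_sq]
  exact_mod_cast eq_sub_of_add_eq h.2.1

theorem commute_gamma_star : Commute γ (star γ) := h.2.2.2

theorem star_gamma_mul_star_alpha [StarModule ℂ A] : star γ * star α = q • (star α * star γ) := by
  simpa only [star_mul, star_smul, Complex.star_def, Complex.conj_conj] using
    congrArg star h.2.2.1

theorem alpha_mul_star_gamma_mul_gamma :
    α * (star γ * γ) = (q * conj q) • (star γ * γ * α) := by
  have : α * (star α * α) = α * star α * α := (mul_assoc _ _ _).symm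
  rw [h.star_alpha_mul_alpha, h.alpha_mul_star_alpha] at this
  simpa [mul_sub, sub_mul, smul_mul_assoc] using this

theorem star_gamma_mul_gamma_mul_star_alpha [StarModule ℂ A] :
    star γ * γ * star α = (q * conj q) • (star α * (star γ * γ)) := by
  simpa [star_smul, mul_assoc, mul_comm] using congrArg star h.alpha_mul_star_gamma_mul_gamma

end Algebraic

variable {A : Type*} [NormedRing A] [StarRing A] [CStarRing A] [NormedAlgebra ℂ A]
  [StarModule ℂ A] {q : ℂ} {α γ : A}

theorem alpha_mul_star_gamma (h : SUq2Rel q α γ) : α * star γ = q • (star γ * α) := by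
  set c := star γ * γ
  have hγc : γ * c = c * γ := by rw [← mul_assoc, h.commute_gamma_star.eq]
  have hγα'αγ' : γ * star α * (α * star γ) = c - c * c := by
    rw [mul_assoc, ← mul_assoc (star α), h.star_alpha_mul_alpha, sub_mul, one_mul, mul_sub,
      ← mul_assoc, hγc, mul_assoc, h.commute_gamma_star.eq]
  have hγα'γ'α : q • (γ * star α * (star γ * α)) = c - c * c := by
    rw [mul_assoc, ← mul_assoc (star α), ← mul_smul_comm, ← smul_mul_assoc,
      ← h.star_gamma_mul_star_alpha, mul_assoc (star γ), h.star_alpha_mul_alpha, ← mul_assoc,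
      h.commute_gamma_star.eq, mul_sub, mul_one]
  have hα'γαγ' : conj q • (star α * γ * (α * star γ)) = c - c * c := by
    rw [mul_assoc, ← mul_assoc γ, ← mul_smul_comm, ← smul_mul_assoc, ← h.2.2.1, mul_assoc α,
      ← mul_assoc (star α), h.star_alpha_mul_alpha, h.commute_gamma_star.eq, sub_mul, one_mul]
  have hα'γγ'α : (q * conj q) • (star α * γ * (star γ * α)) = c - c * c := by
    rw [mul_assoc, ← mul_assoc γ, h.commute_gamma_star.eq, ← mul_assoc, ← smul_mul_assoc,
      ← h.star_gamma_mul_gamma_mul_star_alpha, mul_assoc, h.star_alpha_mul_alpha, mul_sub,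
      mul_one]
  have hx : star (α * star γ - q • (star γ * α)) * (α * star γ - q • (star γ * α)) = 0 := by
    simp only [star_sub, star_mul, star_smul, star_star, Complex.star_def, sub_mul, mul_sub,
      smul_mul_assoc, mul_smul_comm]
    linear_combination (norm := module) hγα'αγ' - hγα'γ'α - hα'γαγ' + hα'γγ'α
  exact sub_eq_zero.mp ((CStarRing.star_mul_self_eq_zero_iff _).mp hx)

end SUq2Rel

section Span

variable {A : Type*} [Ring A] [StarRing A] {α γ : A}

theorem aGen_natCast (m k l : ℕ) : aGen α γ m k l = α ^ m * γ ^ k * star γ ^ l := by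
  simp [aGen]

theorem aGen_neg_natCast (m k l : ℕ) :
    aGen α γ (-m) k l = star α ^ m * γ ^ k * star γ ^ l := by
  cases m with
  | zero => simp [aGen]
  | succ m => rw [aGen, if_neg (by omega), neg_neg, Int.toNat_natCast]

theorem aGen_eq_aGen_zero_zero_mul (n : ℤ) (k l : ℕ) :
    aGen α γ n k l = aGen α γ n 0 0 * (γ ^ k * star γ ^ l) := by
  simp [aGen, mul_assoc]

theorem aGen_mul_gamma_pow_mul_star_gamma_pow (hγ : Commute γ (star γ)) (n : ℤ) (k l i j : ℕ) :
    aGen α γ n k l * (γ ^ i * star γ ^ j) = aGen α γ n (k + i) (l + j) := by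
  rw [aGen, aGen, mul_assoc, mul_assoc, ← mul_assoc (star γ ^ l), ← (hγ.pow_pow i l).eq]
  simp only [pow_add, mul_assoc]

variable [Algebra ℂ A]

theorem aGen_mem_aSpan (n : ℤ) (k l : ℕ) : aGen α γ n k l ∈ aSpan α γ :=
  Submodule.subset_span ⟨(n, k, l), rfl⟩

theorem one_mem_aSpan : (1 : A) ∈ aSpan α γ := by
  simpa [aGen] using aGen_mem_aSpan (α := α) (γ := γ) 0 0 0

theorem mul_mem_aSpan_of_forall_aGen_mul_mem {z : A}
    (hz : ∀ n k l, aGen α γ n k l * z ∈ aSpan α γ) {x : A} (hx : x ∈ aSpan α γ) :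
    x * z ∈ aSpan α γ := by
  have : aSpan α γ ≤ (aSpan α γ).comap (LinearMap.mulRight ℂ z) :=
    Submodule.span_le.mpr (by rintro _ ⟨⟨n, k, l⟩, rfl⟩; exact hz n k l)
  exact this hx

theorem mul_gamma_pow_mul_star_gamma_pow_mem_aSpan (hγ : Commute γ (star γ)) {x : A}
    (hx : x ∈ aSpan α γ) (i j : ℕ) : x * (γ ^ i * star γ ^ j) ∈ aSpan α γ :=
  mul_mem_aSpan_of_forall_aGen_mul_mem (fun n k l => by
    rw [aGen_mul_gamma_pow_mul_star_gamma_pow hγ]; exact aGen_mem_aSpan _ _ _) hx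

end Span

namespace SUq2Rel

variable {A : Type*} [Ring A] [StarRing A] [Algebra ℂ A] {q : ℂ} {α γ : A}

theorem aGen_zero_zero_mul_alpha_mem_aSpan (h : SUq2Rel q α γ) (n : ℤ) :
    aGen α γ n 0 0 * α ∈ aSpan α γ := by
  obtain ⟨m, rfl | rfl⟩ := Int.eq_nat_or_neg n
  · have : aGen α γ m 0 0 * α = aGen α γ (m + 1 : ℕ) 0 0 := by
      simp only [aGen_natCast, pow_succ, pow_zero, mul_one]
    exact this ▸ aGen_mem_aSpan _ _ _
  cases m with
  | zero =>
    have : aGen α γ (-(0 : ℕ)) 0 0 * α = aGen α γ (1 : ℕ) 0 0 := by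
      simp only [aGen_neg_natCast, aGen_natCast, pow_zero, pow_one, mul_one, one_mul]
    exact this ▸ aGen_mem_aSpan _ _ _
  | succ m =>
    have : aGen α γ (-(m + 1 : ℕ)) 0 0 * α = aGen α γ (-m) 0 0 - aGen α γ (-m) 1 1 := by
      simp only [aGen_neg_natCast, pow_zero, pow_one, mul_one]
      rw [pow_succ, mul_assoc, h.star_alpha_mul_alpha, mul_sub, mul_one, mul_assoc,
        h.commute_gamma_star.eq]
    exact this ▸ sub_mem (aGen_mem_aSpan _ _ _) (aGen_mem_aSpan _ _ _)

theorem aGen_zero_zero_mul_star_alpha_mem_aSpan (h : SUq2Rel q α γ) (n : ℤ) :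
    aGen α γ n 0 0 * star α ∈ aSpan α γ := by
  obtain ⟨m, rfl | rfl⟩ := Int.eq_nat_or_neg n
  swap
  · have : aGen α γ (-m) 0 0 * star α = aGen α γ (-(m + 1 : ℕ)) 0 0 := by
      simp only [aGen_neg_natCast, pow_succ, pow_zero, mul_one]
    exact this ▸ aGen_mem_aSpan _ _ _
  cases m with
  | zero =>
    have : aGen α γ (0 : ℕ) 0 0 * star α = aGen α γ (-(1 : ℕ)) 0 0 := by
      simp only [aGen_neg_natCast, aGen_natCast, pow_zero, pow_one, mul_one, one_mul]
    exact this ▸ aGen_mem_aSpan _ _ _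
  | succ m =>
    have : aGen α γ (m + 1 : ℕ) 0 0 * star α =
        aGen α γ m 0 0 - (q * conj q) • aGen α γ m 1 1 := by
      simp only [aGen_natCast, pow_zero, pow_one, mul_one]
      rw [pow_succ, mul_assoc, h.alpha_mul_star_alpha, mul_sub, mul_one, mul_smul_comm,
        mul_assoc, h.commute_gamma_star.eq]
    exact this ▸ sub_mem (aGen_mem_aSpan _ _ _) (Submodule.smul_mem _ _ (aGen_mem_aSpan _ _ _))

theorem aGen_mul_alpha_mem_aSpan (h : SUq2Rel q α γ) (h5 : α * star γ = q • (star γ * α))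
    (hq : q ≠ 0) (n : ℤ) (k l : ℕ) : aGen α γ n k l * α ∈ aSpan α γ := by
  have hγα : γ * α = (conj q)⁻¹ • (α * γ) :=
    ((inv_smul_eq_iff₀ ((map_ne_zero _).mpr hq)).mpr h.2.2.1).symm
  have hγ'α : star γ * α = q⁻¹ • (α * star γ) := ((inv_smul_eq_iff₀ hq).mpr h5).symm
  rw [aGen_eq_aGen_zero_zero_mul, mul_assoc, pow_mul_pow_mul_eq_smul_mul hγα hγ'α,
    mul_smul_comm, ← mul_assoc]
  exact Submodule.smul_mem _ _ (mul_gamma_pow_mul_star_gamma_pow_mem_aSpan h.commute_gamma_star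
    (h.aGen_zero_zero_mul_alpha_mem_aSpan n) k l)

theorem aGen_mul_star_alpha_mem_aSpan [StarModule ℂ A] (h : SUq2Rel q α γ)
    (h5 : α * star γ = q • (star γ * α)) (n : ℤ) (k l : ℕ) :
    aGen α γ n k l * star α ∈ aSpan α γ := by
  have hγα' : γ * star α = conj q • (star α * γ) := by
    simpa only [star_mul, star_smul, star_star, Complex.star_def] using congrArg star h5
  rw [aGen_eq_aGen_zero_zero_mul, mul_assoc,
    pow_mul_pow_mul_eq_smul_mul hγα' h.star_gamma_mul_star_alpha, mul_smul_comm, ← mul_assoc]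
  exact Submodule.smul_mem _ _ (mul_gamma_pow_mul_star_gamma_pow_mem_aSpan h.commute_gamma_star
    (h.aGen_zero_zero_mul_star_alpha_mem_aSpan n) k l)

theorem mul_mem_aSpan_of_mem_generators [StarModule ℂ A] (h : SUq2Rel q α γ)
    (h5 : α * star γ = q • (star γ * α)) (hq : q ≠ 0) {x y : A}
    (hy : y ∈ ({α, γ} ∪ star {α, γ} : Set A)) (hx : x ∈ aSpan α γ) : x * y ∈ aSpan α γ := by
  have hγ := h.commute_gamma_star
  refine mul_mem_aSpan_of_forall_aGen_mul_mem (fun n k l => ?_) hx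
  rcases hy with (hy | hy) | hy
  · rw [hy]
    exact h.aGen_mul_alpha_mem_aSpan h5 hq n k l
  · have := aGen_mul_gamma_pow_mul_star_gamma_pow (α := α) hγ n k l 1 0
    rw [pow_one, pow_zero, mul_one, add_zero] at this
    rw [hy, this]
    exact aGen_mem_aSpan _ _ _
  rcases hy with hy | hy <;> rw [← star_star y, hy]
  · exact h.aGen_mul_star_alpha_mem_aSpan h5 n k l
  · have := aGen_mul_gamma_pow_mul_star_gamma_pow (α := α) hγ n k l 0 1
    rw [pow_one, pow_zero, one_mul, add_zero] at this
    rw [this]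
    exact aGen_mem_aSpan _ _ _

theorem coe_aSpan_eq_adjoin [StarModule ℂ A] (h : SUq2Rel q α γ)
    (h5 : α * star γ = q • (star γ * α)) (hq : q ≠ 0) :
    (aSpan α γ : Set A) = StarAlgebra.adjoin ℂ {α, γ} := by
  refine subset_antisymm (fun x hx => ?_) fun x hx => ?_
  · refine (Submodule.span_le (p := Subalgebra.toSubmodule (StarAlgebra.adjoin ℂ {α, γ} :
      StarSubalgebra ℂ A).toSubalgebra)).mpr ?_ hx
    rintro _ ⟨⟨n, k, l⟩, rfl⟩
    show aGen α γ n k l ∈ StarAlgebra.adjoin ℂ {α, γ}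
    have hα : α ∈ StarAlgebra.adjoin ℂ {α, γ} := StarAlgebra.subset_adjoin ℂ _ (.inl rfl)
    have hγ : γ ∈ StarAlgebra.adjoin ℂ {α, γ} := StarAlgebra.subset_adjoin ℂ _ (.inr rfl)
    refine mul_mem (mul_mem ?_ (pow_mem hγ k)) (pow_mem (star_mem hγ) l)
    split_ifs
    exacts [pow_mem hα _, pow_mem (star_mem hα) _]
  · have : x ∈ Subalgebra.toSubmodule (Algebra.adjoin ℂ ({α, γ} ∪ star {α, γ})) := hx
    rw [Algebra.adjoin_eq_span] at this
    refine Submodule.span_le.mpr (fun y hy => ?_) this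
    induction hy using Submonoid.closure_induction_right with
    | one => exact one_mem_aSpan
    | mul_right x _ y hy ih => exact h.mul_mem_aSpan_of_mem_generators h5 hq hy ih

end SUq2Rel

theorem stmt1_general (q : ℂ) (hq0 : 0 < ‖q‖)
    {A : Type*} [NormedRing A] [StarRing A] [CStarRing A] [NormedAlgebra ℂ A]
    [StarModule ℂ A]
    (α γ : A) (h : SUq2Rel q α γ) :
    closure ((aSpan α γ : Submodule ℂ A) : Set A)
        = closure ((StarAlgebra.adjoin ℂ {α, γ} : StarSubalgebra ℂ A) : Set A) ∧
      (1 : A) ∈ aSpan α γ ∧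
      (∀ x ∈ aSpan α γ, ∀ y ∈ aSpan α γ, x * y ∈ aSpan α γ) ∧
      (∀ x ∈ aSpan α γ, star x ∈ aSpan α γ) := by
  have hS := h.coe_aSpan_eq_adjoin h.alpha_mul_star_gamma (norm_pos_iff.mp hq0)
  simp only [← SetLike.mem_coe, hS, true_and]
  exact ⟨one_mem _, fun x hx y hy => mul_mem hx hy, fun x hx => star_mem hx⟩

theorem stmt1 (q : ℂ) (hq0 : 0 < ‖q‖) (hq1 : ‖q‖ < 1)
    {A : Type*} [NormedRing A] [StarRing A] [CStarRing A] [NormedAlgebra ℂ A]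
    [StarModule ℂ A] [CompleteSpace A]
    (α γ : A) (h : SUq2Rel q α γ) :
    closure ((aSpan α γ : Submodule ℂ A) : Set A)
        = closure ((StarAlgebra.adjoin ℂ {α, γ} : StarSubalgebra ℂ A) : Set A) ∧
      (1 : A) ∈ aSpan α γ ∧
      (∀ x ∈ aSpan α γ, ∀ y ∈ aSpan α γ, x * y ∈ aSpan α γ) ∧
      (∀ x ∈ aSpan α γ, star x ∈ aSpan α γ) :=
  stmt1_general q hq0 α γ h
end

section
/- Let A be a unital C*-algebra and let α, γ ∈ A satisfy the SU_q(2) relations. Then for all k, l ∈ ℕ: if l ≥ k then α^{l−k}γᵏ(γ*)ˡ = q^{(l−k)(l−k−1)/2}·(αγ*)^{l−k}·(γ*γ)ᵏ, and if l < k then (α*)^{k−l}γᵏ(γ*)ˡ = conj(q)^{−(k−l)(k−l+1)/2}·(γα*)^{k−l}·(γ*γ)ˡ. -/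
open scoped ComplexConjugate

section Aux

variable {A : Type*} [Ring A] [Module ℂ A] [IsScalarTower ℂ A A] [SMulCommClass ℂ A A]

lemma tri_aux (n : ℕ) : n * (n - 1) / 2 + n = n * (n + 1) / 2 := by
  obtain _ | m := n
  · rfl
  · have h1 : (m + 1) * (m + 1 + 1) = (m + 1) * m + (m + 1) * 2 := by ring
    rw [Nat.add_sub_cancel, h1, Nat.add_mul_div_right _ _ (by norm_num : (0:ℕ) < 2)]

lemma aux_move (t : ℂ) (a b : A) (hab : a * b = t • (b * a)) :
    ∀ n : ℕ, a * (a * b) ^ n = t ^ n • ((a * b) ^ n * a)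
  | 0 => by simp
  | n + 1 => by
    have h1 : a * (a * b) = t • ((a * b) * a) := by
      calc a * (a * b) = a * (t • (b * a)) := by rw [hab]
        _ = t • ((a * b) * a) := by rw [mul_smul_comm]; rw [mul_assoc]
    calc a * (a * b) ^ (n + 1) = (a * (a * b)) * (a * b) ^ n := by
          rw [pow_succ']; rw [← mul_assoc]
      _ = t • ((a * b) * (a * (a * b) ^ n)) := by rw [h1, smul_mul_assoc, mul_assoc]
      _ = t • ((a * b) * (t ^ n • ((a * b) ^ n * a))) := by rw [aux_move t a b hab n]
      _ = t ^ (n + 1) • ((a * b) ^ (n + 1) * a) := by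
          rw [mul_smul_comm, smul_smul]
          congr 1
          · exact (pow_succ' t n).symm
          · rw [pow_succ']
            simp only [mul_assoc]

lemma aux_swap (t : ℂ) (a b : A) (hab : a * b = t • (b * a)) :
    ∀ n : ℕ, a ^ n * b ^ n = t ^ (n * (n - 1) / 2) • ((a * b) ^ n)
  | 0 => by simp
  | n + 1 => by
    calc a ^ (n + 1) * b ^ (n + 1) = a * (a ^ n * b ^ n) * b := by
          rw [pow_succ', pow_succ]; noncomm_ring
      _ = a * (t ^ (n * (n - 1) / 2) • (a * b) ^ n) * b := by rw [aux_swap t a b hab n]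
      _ = t ^ (n * (n - 1) / 2) • (a * (a * b) ^ n * b) := by
          rw [mul_smul_comm, smul_mul_assoc]
      _ = t ^ (n * (n - 1) / 2) • ((t ^ n • ((a * b) ^ n * a)) * b) := by
          rw [aux_move t a b hab n]
      _ = (t ^ (n * (n - 1) / 2) * t ^ n) • ((a * b) ^ (n + 1)) := by
          rw [smul_mul_assoc, smul_smul, pow_succ, mul_assoc]
      _ = t ^ ((n + 1) * (n + 1 - 1) / 2) • ((a * b) ^ (n + 1)) := by
          rw [← pow_add]
          congr 1
          rw [Nat.add_sub_cancel, Nat.mul_comm (n + 1) n, ← tri_aux n]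

end Aux

lemma qcomm_lemma (q : ℂ) (hq0 : 0 < ‖q‖)
    {A : Type*} [NormedRing A] [StarRing A] [CStarRing A] [NormedAlgebra ℂ A]
    [StarModule ℂ A]
    (α γ : A) (h : SUq2Rel q α γ) :
    α * star γ = q • (star γ * α) := by
  obtain ⟨h1, h2, h3, h4⟩ := h
  have hqr : ((‖q‖ : ℂ)) ^ 2 = q * conj q := by
    rw [Complex.mul_conj]
    norm_cast
    exact Complex.sq_norm q
  rw [hqr] at h2
  have e1 : star α * α = 1 - star γ * γ := eq_sub_of_add_eq h1
  have e2 : α * star α = 1 - (q * conj q) • (star γ * γ) := eq_sub_of_add_eq h2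
  have e5 : α * (star γ * γ) = (q * conj q) • ((star γ * γ) * α) := by
    have key : α * (star α * α) = (α * star α) * α := by rw [mul_assoc]
    rw [e1, e2, mul_sub, sub_mul, mul_one, one_mul, smul_mul_assoc] at key
    rwa [sub_right_inj] at key
  have h3' : star γ * star α = q • (star α * star γ) := by
    have := congrArg star h3
    simpa [star_mul, star_smul] using this
  set x := α * star γ - q • (star γ * α) with hx
  have hxs : star x = γ * star α - conj q • (star α * γ) := by
    simp [hx, star_sub, star_smul, star_mul, Complex.star_def]
  have hA : (α * star γ) * (γ * star α)
      = (q * conj q) • (star γ * γ) -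
        ((q * conj q) * (q * conj q)) • ((star γ * γ) * (star γ * γ)) := by
    have step : (α * star γ) * (γ * star α) = (α * (star γ * γ)) * star α := by
      noncomm_ring
    rw [step, e5, smul_mul_assoc, mul_assoc, e2]
    simp only [mul_sub, mul_one, mul_smul_comm, smul_sub, smul_smul]
  have hB : (α * star γ) * (star α * γ)
      = q • (star γ * γ) - (q * (q * conj q)) • ((star γ * γ) * (star γ * γ)) := by
    have step : (α * star γ) * (star α * γ) = α * (star γ * star α) * γ := by
      noncomm_ring
    rw [step, h3', mul_smul_comm, smul_mul_assoc]
    have step2 : α * (star α * star γ) * γ = (α * star α) * (star γ * γ) := by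
      noncomm_ring
    rw [step2, e2]
    simp only [sub_mul, one_mul, smul_mul_assoc, smul_sub, smul_smul]
  have hC : (star γ * α) * (γ * star α)
      = conj q • (star γ * γ) -
        (conj q * (q * conj q)) • ((star γ * γ) * (star γ * γ)) := by
    have step : (star γ * α) * (γ * star α) = star γ * (α * γ) * star α := by
      noncomm_ring
    rw [step, h3, mul_smul_comm, smul_mul_assoc]
    have step2 : star γ * (γ * α) * star α = (star γ * γ) * (α * star α) := by
      noncomm_ring
    rw [step2, e2]
    simp only [mul_sub, mul_one, mul_smul_comm, smul_sub, smul_smul]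
  have hD : (star γ * α) * (star α * γ)
      = (star γ * γ) - (q * conj q) • ((star γ * γ) * (star γ * γ)) := by
    have step : (star γ * α) * (star α * γ) = star γ * ((α * star α) * γ) := by
      noncomm_ring
    rw [step, e2, sub_mul, one_mul, smul_mul_assoc, mul_sub, mul_smul_comm]
    have hcc : star γ * ((star γ * γ) * γ) = (star γ * γ) * (star γ * γ) := by
      have : (star γ * γ) * (star γ * γ) = star γ * (γ * star γ) * γ := by noncomm_ring
      rw [this, h4]; noncomm_ring
    rw [hcc]
  have hxx : x * star x = 0 := by
    rw [hx, hxs]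
    simp only [sub_mul, mul_sub, smul_mul_assoc, mul_smul_comm, smul_sub, smul_smul]
    rw [hA, hB, hC, hD]
    module
  have hx0 : x = 0 := (CStarRing.mul_star_self_eq_zero_iff x).mp hxx
  have := sub_eq_zero.mp hx0
  exact this

theorem stmt2 (q : ℂ) (hq0 : 0 < ‖q‖) (hq1 : ‖q‖ < 1)
    {A : Type*} [NormedRing A] [StarRing A] [CStarRing A] [NormedAlgebra ℂ A]
    [StarModule ℂ A] [CompleteSpace A]
    (α γ : A) (h : SUq2Rel q α γ) (k l : ℕ) :
    (k ≤ l →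
      α ^ (l - k) * γ ^ k * star γ ^ l
        = (q ^ ((l - k) * (l - k - 1) / 2)) •
            ((α * star γ) ^ (l - k) * (star γ * γ) ^ k)) ∧
    (l < k →
      star α ^ (k - l) * γ ^ k * star γ ^ l
        = ((conj q) ^ (-(((k - l) * (k - l + 1) / 2 : ℕ) : ℤ))) •
            ((γ * star α) ^ (k - l) * (star γ * γ) ^ l)) := by
  have hqne : q ≠ 0 := by
    intro hz
    rw [hz] at hq0
    simp at hq0
  have hqcne : conj q ≠ 0 := by simpa using hqne
  have hcomm : Commute γ (star γ) := h.2.2.2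
  have qcomm : α * star γ = q • (star γ * α) := qcomm_lemma q hq0 α γ h
  constructor
  · intro hkl
    set n := l - k with hn
    have hl : l = n + k := by omega
    have hgs : γ ^ k * star γ ^ l = star γ ^ n * (star γ * γ) ^ k := by
      rw [hl, (hcomm.pow_pow k (n + k)).eq, pow_add, mul_assoc,
        (hcomm.symm.mul_pow k)]
    rw [mul_assoc, hgs, ← mul_assoc, aux_swap q α (star γ) qcomm n, smul_mul_assoc]
  · intro hlk
    set n := k - l with hn
    have hk : k = n + l := by omega
    have hgs : γ ^ k * star γ ^ l = γ ^ n * (star γ * γ) ^ l := by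
      rw [hk, pow_add, mul_assoc, ← (hcomm.mul_pow l), hcomm.eq]
    have grev : γ * star α = conj q • (star α * γ) := by
      have := congrArg star qcomm
      simpa [star_mul, star_smul, Complex.star_def] using this
    have hab : star α * γ = (conj q)⁻¹ • (γ * star α) := by
      rw [grev, smul_smul, inv_mul_cancel₀ hqcne, one_smul]
    have hswap := aux_swap ((conj q)⁻¹) (star α) γ hab n
    have hpow : (star α * γ) ^ n = ((conj q)⁻¹) ^ n • (γ * star α) ^ n := by
      rw [hab, smul_pow]
    have hscal : (conj q) ^ (-((n * (n + 1) / 2 : ℕ) : ℤ))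
        = ((conj q)⁻¹) ^ (n * (n - 1) / 2) * ((conj q)⁻¹) ^ n := by
      rw [← pow_add, tri_aux n, inv_pow,
        ← zpow_natCast (conj q) (n * (n + 1) / 2), ← zpow_neg]
    rw [mul_assoc, hgs, ← mul_assoc, hswap, hpow, smul_smul, smul_mul_assoc, hscal]
end

section
/- Let A be a unital C*-algebra and let α, γ ∈ A satisfy the SU_q(2) relations. Let W ∈ M₃(A) be the matrix with rows [α², −σαγ*, q²(γ*)²], [σγα, 1 − σ²γ*γ, −σγ*α*], [ζγ², σα*γ, (α*)²], where σ = √(1+|q|²) and ζ = q/conj(q). Then W is unitary: W·W^H = 1 and W^H·W = 1 in M₃(A), where W^H denotes the conjugate transpose of W formed with the star operation of A. -/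
open scoped ComplexConjugate

/-- `ζ = q / conj q`. -/
noncomputable def zetaC (q : ℂ) : ℂ := q / conj q

/-- `σ = √(1 + |q|²)`, as a complex scalar. -/
noncomputable def sigC (q : ℂ) : ℂ := (Real.sqrt (1 + ‖q‖ ^ 2) : ℂ)

/-- The matrix `W` of the three-dimensional representation. -/
noncomputable def Wmat {A : Type*} [Ring A] [StarRing A] [Module ℂ A] (q : ℂ) (α γ : A) :
    Matrix (Fin 3) (Fin 3) A :=
  !![α ^ 2, -(sigC q • (α * star γ)), (q ^ 2) • star γ ^ 2;
     sigC q • (γ * α), 1 - (sigC q ^ 2) • (star γ * γ), -(sigC q • (star γ * star α));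
     zetaC q • γ ^ 2, sigC q • (star α * γ), star α ^ 2]

set_option maxHeartbeats 4000000 in
theorem stmt4 (q : ℂ) (hq0 : 0 < ‖q‖) (hq1 : ‖q‖ < 1)
    {A : Type*} [NormedRing A] [StarRing A] [CStarRing A] [NormedAlgebra ℂ A]
    [StarModule ℂ A] [CompleteSpace A]
    (α γ : A) (h : SUq2Rel q α γ) :
    Wmat q α γ * (Wmat q α γ).conjTranspose = 1 ∧
    (Wmat q α γ).conjTranspose * Wmat q α γ = 1 := by
  obtain ⟨h1, h2, h3, h4⟩ := h
  have hq : q ≠ 0 := by simpa using hq0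
  have hcq : conj q ≠ 0 := by simpa using hq
  have hk : ((‖q‖ : ℂ)) ^ 2 = conj q * q := by
    rw [← Complex.ofReal_pow, Complex.sq_norm, Complex.normSq_eq_conj_mul_self]
  rw [hk] at h2
  have h2' : α * star α = 1 - (conj q * q) • (star γ * γ) := eq_sub_of_add_eq h2
  have hba : star α * α = 1 - star γ * γ := eq_sub_of_add_eq h1
  have hS2 : sigC q * sigC q = 1 + conj q * q := by
    unfold sigC
    rw [← Complex.ofReal_mul, Real.mul_self_sqrt (by positivity)]
    push_cast
    rw [hk]
  have hconjS : conj (sigC q) = sigC q := by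
    unfold sigC; exact Complex.conj_ofReal _
  have hS2x : ∀ x : ℂ, sigC q * (sigC q * x) = (1 + conj q * q) * x := fun x => by
    rw [← mul_assoc, hS2]
  have hS2sq2 : sigC q ^ 2 = 1 + conj q * q := by rw [pow_two, hS2]
  have hS2sq3 : sigC q ^ 3 = (1 + conj q * q) * sigC q := by
    rw [pow_succ, hS2sq2]
  have hS2sq4 : sigC q ^ 4 = (1 + conj q * q) ^ 2 := by
    rw [show (4:ℕ) = 2*2 from rfl, pow_mul, hS2sq2]
  have Hacx : ∀ w : A, α * (γ * w) = conj q • (γ * (α * w)) := fun w => by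
    rw [← mul_assoc, h3, smul_mul_assoc, mul_assoc]
  have Hdb : star γ * star α = q • (star α * star γ) := by
    have := congrArg star h3
    simpa [star_smul, Complex.star_def] using this
  have Hdbx : ∀ w : A, star γ * (star α * w) = q • (star α * (star γ * w)) := fun w => by
    rw [← mul_assoc, Hdb, smul_mul_assoc, mul_assoc]
  have Habx : ∀ w : A, α * (star α * w) = w - (conj q * q) • (star γ * (γ * w)) := fun w => by
    rw [← mul_assoc, h2', sub_mul, one_mul, smul_mul_assoc, mul_assoc]
  have Hbax : ∀ w : A, star α * (α * w) = w - star γ * (γ * w) := fun w => by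
    rw [← mul_assoc, hba, sub_mul, one_mul, mul_assoc]
  have Hcdx : ∀ w : A, γ * (star γ * w) = star γ * (γ * w) := fun w => by
    rw [← mul_assoc, h4, mul_assoc]
  have haN : α * (star γ * γ) = (conj q * q) • (star γ * (γ * α)) := by
    have hNN : star γ * γ = 1 - star α * α := eq_sub_of_add_eq' h1
    calc α * (star γ * γ) = α - α * (star α * α) := by
          rw [hNN, mul_sub, mul_one]
      _ = α - (1 - (conj q * q) • (star γ * γ)) * α := by rw [← mul_assoc, h2']
      _ = (conj q * q) • (star γ * (γ * α)) := by
          rw [sub_mul, one_mul, smul_mul_assoc, sub_sub_cancel, mul_assoc]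
  have haNx : ∀ w : A, α * (star γ * (γ * w)) = (conj q * q) • (star γ * (γ * (α * w))) :=
    fun w => by
    calc α * (star γ * (γ * w)) = (α * (star γ * γ)) * w := by simp only [mul_assoc]
      _ = ((conj q * q) • (star γ * (γ * α))) * w := by rw [haN]
      _ = (conj q * q) • (star γ * (γ * (α * w))) := by simp only [smul_mul_assoc, mul_assoc]
  have key : α * star γ = q • (star γ * α) := by
    have hz : (α * star γ - q • (star γ * α)) * star (α * star γ - q • (star γ * α)) = 0 := by
      simp only [star_sub, star_smul, star_mul, star_star, Complex.star_def, sub_mul, mul_sub,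
        smul_mul_assoc, mul_smul_comm, smul_sub, smul_smul, Hacx, h3, Hdbx, Hdb, Habx, h2',
        haNx, haN, Hcdx, h4, mul_assoc, one_mul, mul_one]
      match_scalars <;> ring1
    exact sub_eq_zero.mp ((CStarRing.mul_star_self_eq_zero_iff _).mp hz)
  have Hadx : ∀ w : A, α * (star γ * w) = q • (star γ * (α * w)) := fun w => by
    rw [← mul_assoc, key, smul_mul_assoc, mul_assoc]
  have Hcb : γ * star α = conj q • (star α * γ) := by
    have := congrArg star key
    simpa [star_smul, Complex.star_def] using this
  have Hcbx : ∀ w : A, γ * (star α * w) = conj q • (star α * (γ * w)) := fun w => by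
    rw [← mul_assoc, Hcb, smul_mul_assoc, mul_assoc]
  have Hbc : star α * γ = (conj q)⁻¹ • (γ * star α) := by
    rw [Hcb, smul_smul, inv_mul_cancel₀ hcq, one_smul]
  have Hbcx : ∀ w : A, star α * (γ * w) = (conj q)⁻¹ • (γ * (star α * w)) := fun w => by
    rw [← mul_assoc, Hbc, smul_mul_assoc, mul_assoc]
  have Hbd : star α * star γ = q⁻¹ • (star γ * star α) := by
    rw [Hdb, smul_smul, inv_mul_cancel₀ hq, one_smul]
  have Hbdx : ∀ w : A, star α * (star γ * w) = q⁻¹ • (star γ * (star α * w)) := fun w => by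
    rw [← mul_assoc, Hbd, smul_mul_assoc, mul_assoc]
  constructor <;>
  · ext i j
    fin_cases i <;> fin_cases j <;>
    · simp [Wmat, Matrix.one_apply, Matrix.conjTranspose_apply, Matrix.mul_apply, Fin.sum_univ_three,
        Matrix.cons_val', Matrix.cons_val_zero, Matrix.cons_val_one, Matrix.head_cons,
        Matrix.empty_val', Matrix.cons_val_fin_one, Matrix.head_fin_const,
        Matrix.cons_val_two, Matrix.tail_cons, Fin.isValue, Fin.zero_eta, Fin.mk_one,
        star_sub, star_smul, star_mul, star_one, star_star, star_neg, star_pow,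
        Complex.star_def, pow_two, zetaC, map_div₀, map_add, map_mul, map_sub, map_one, Complex.conj_conj, Matrix.of_apply,
        sub_mul, mul_sub, neg_mul, mul_neg, neg_neg, smul_neg, neg_smul, smul_sub, sub_neg_eq_add,
        smul_mul_assoc, mul_smul_comm, smul_smul, one_mul, mul_one,
        Hacx, h3, Hadx, key, Hbcx, Hbc, Hbdx, Hbd, Habx, h2', Hbax, hba, Hcdx, h4,
        hS2x, hS2, hconjS, mul_assoc]
      match_scalars <;> field_simp [hq, hcq] <;> ring_nf <;>
        (try simp only [hS2sq2, hS2sq3, hS2sq4]) <;> (try field_simp [hq, hcq]) <;> ring1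
end

section
/- Let A be a unital C*-algebra and let (α₁, γ₁) and (α₂, γ₂) be two pairs of elements, each satisfying the SU_q(2) relations, such that moreover: α₂ and α₂* commute with each of α₁, γ₁, α₁*, γ₁*; γ₂α₁ = α₁γ₂, γ₂α₁* = α₁*γ₂, γ₂γ₁ = conj(ζ)·γ₁γ₂, γ₂γ₁* = ζ·γ₁*γ₂; and γ₂*α₁ = α₁γ₂*, γ₂*α₁* = α₁*γ₂*, γ₂*γ₁ = ζ·γ₁γ₂*, γ₂*γ₁* = conj(ζ)·γ₁*γ₂*. Define Δα = α₁α₂ − q·γ₁*γ₂ and Δγ = γ₁α₂ + α₁*γ₂. Then for all i, j ∈ {−1, 0, 1}: v_{i,j}(Δα, Δγ) = Σ_{k ∈ {−1,0,1}} v_{i,k}(α₁, γ₁) · v_{k,j}(α₂, γ₂). (Equivalently, the 3×3 matrix V evaluated at (Δα, Δγ) equals the matrix product of V evaluated at (α₁, γ₁) with V evaluated at (α₂, γ₂).) -/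
open scoped ComplexConjugate

/-- `ς = |q|²`, as a complex scalar. -/
noncomputable def vsig (q : ℂ) : ℂ := (‖q‖ : ℂ) ^ 2

/-- `σ² = 1 + |q|²`, as a complex scalar. -/
noncomputable def sigSq (q : ℂ) : ℂ := 1 + vsig q

/-- The matrix elements `v_{i,j}(x, y)`, `i, j ∈ {-1, 0, 1}` (and `0` for other indices). -/
noncomputable def vij {A : Type*} [Ring A] [StarRing A] [Module ℂ A]
    (q : ℂ) (x y : A) (i j : ℤ) : A :=
  if i = -1 then
    if j = -1 then x ^ 2
    else if j = 0 then -(sigSq q • (star y * x))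
    else if j = 1 then -(q • star y ^ 2)
    else 0
  else if i = 0 then
    if j = -1 then zetaC q • (x * y)
    else if j = 0 then 1 - sigSq q • (star y * y)
    else if j = 1 then star y * star x
    else 0
  else if i = 1 then
    if j = -1 then -((q * zetaC q) • y ^ 2)
    else if j = 0 then -(sigSq q • (star x * y))
    else if j = 1 then star x ^ 2
    else 0
  else 0


/-
The one relation needed beyond the hypotheses is `α₁ γ₁* = q γ₁* α₁`; it follows from
`α₁ γ₁ = q̄ γ₁ α₁` and the normality of `γ₁` by the Fuglede–Putnam theorem. Granting it, both
sides of each entry expand into words in the generators and their adjoints, and the commutation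
relations bring every word to a normal form, with the letters of the first pair to the left of
those of the second and each pair ordered (`α₁ α₁*` and `α₂* α₂` being eliminated). The
coefficients of the normal words then agree modulo `ζ q̄ = q` and `ζ̄ q = q̄`.
-/

theorem zetaC_mul_conj (q : ℂ) : zetaC q * conj q = q := by
  rcases eq_or_ne q 0 with rfl | hq
  · simp [zetaC]
  · exact div_mul_cancel₀ q ((map_ne_zero _).2 hq)

theorem conj_zetaC_mul (q : ℂ) : conj (zetaC q) * q = conj q := by
  simpa [mul_comm] using congr(conj $(zetaC_mul_conj q))

section Relations

variable {A : Type*} [Ring A] [StarRing A] [Algebra ℂ A] {q : ℂ} {α γ : A}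

theorem SUq2Rel.star_mul_self_eq (h : SUq2Rel q α γ) : star α * α = 1 - star γ * γ :=
  eq_sub_of_add_eq h.1

theorem SUq2Rel.mul_star_self_eq (h : SUq2Rel q α γ) :
    α * star α = 1 - (q * conj q) • (star γ * γ) := by
  rw [Complex.mul_conj']
  exact eq_sub_of_add_eq h.2.1

theorem SUq2Rel.star_mul_star_eq [StarModule ℂ A] (h : SUq2Rel q α γ) :
    star γ * star α = q • (star α * star γ) := by
  simpa using congr(star $(h.2.2.1))

end Relations

theorem SUq2Rel.mul_star_eq {A : Type*} [NormedRing A] [StarRing A] [CStarRing A]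
    [NormedAlgebra ℂ A] [StarModule ℂ A] [CompleteSpace A] {q : ℂ} {α γ : A}
    (h : SUq2Rel q α γ) : α * star γ = q • (star γ * α) := by
  let _ : CStarAlgebra A := {}
  have hγ : IsStarNormal γ := ⟨h.2.2.2.symm⟩
  have hαγ : SemiconjBy α γ (conj q • γ) := by
    rw [SemiconjBy, smul_mul_assoc, ← h.2.2.1]
  simpa using (hαγ.star_right hγ inferInstance).eq

theorem sum_neg_one_zero_one {M : Type*} [AddCommMonoid M] (f : ℤ → M) :
    ∑ k ∈ ({-1, 0, 1} : Finset ℤ), f k = f (-1) + f 0 + f 1 := by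
  rw [Finset.sum_insert (by decide), Finset.sum_insert (by decide), Finset.sum_singleton,
    add_assoc]

theorem mul_mul_eq_of_mul_eq {M : Type*} [Semigroup M] {a b c : M} (h : a * b = c) (x : M) :
    a * (b * x) = c * x := by
  rw [← mul_assoc, h]

theorem vij_comul {A : Type*} [Ring A] [StarRing A] [Algebra ℂ A] [StarModule ℂ A] {q : ℂ}
    {α₁ γ₁ α₂ γ₂ : A} (h₁ : SUq2Rel q α₁ γ₁) (h₂ : SUq2Rel q α₂ γ₂)
    (h₁' : α₁ * star γ₁ = q • (star γ₁ * α₁))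
    (hc1 : α₂ * α₁ = α₁ * α₂) (hc2 : α₂ * γ₁ = γ₁ * α₂)
    (hc3 : α₂ * star α₁ = star α₁ * α₂) (hc4 : α₂ * star γ₁ = star γ₁ * α₂)
    (hc5 : star α₂ * α₁ = α₁ * star α₂) (hc6 : star α₂ * γ₁ = γ₁ * star α₂)
    (hc7 : star α₂ * star α₁ = star α₁ * star α₂)
    (hc8 : star α₂ * star γ₁ = star γ₁ * star α₂)
    (hc9 : γ₂ * α₁ = α₁ * γ₂) (hc10 : γ₂ * star α₁ = star α₁ * γ₂)
    (hc11 : γ₂ * γ₁ = conj (zetaC q) • (γ₁ * γ₂))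
    (hc12 : γ₂ * star γ₁ = zetaC q • (star γ₁ * γ₂))
    (hc13 : star γ₂ * α₁ = α₁ * star γ₂) (hc14 : star γ₂ * star α₁ = star α₁ * star γ₂)
    (hc15 : star γ₂ * γ₁ = zetaC q • (γ₁ * star γ₂))
    (hc16 : star γ₂ * star γ₁ = conj (zetaC q) • (star γ₁ * star γ₂))
    {i j : ℤ} (hi : i ∈ ({-1, 0, 1} : Finset ℤ)) (hj : j ∈ ({-1, 0, 1} : Finset ℤ)) :
    vij q (α₁ * α₂ - q • (star γ₁ * γ₂)) (γ₁ * α₂ + star α₁ * γ₂) i j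
      = ∑ k ∈ ({-1, 0, 1} : Finset ℤ), vij q α₁ γ₁ i k * vij q α₂ γ₂ k j := by
  have r₁ := h₁.2.2.1
  have r₁' : γ₁ * star α₁ = conj q • (star α₁ * γ₁) := by simpa using congr(star $h₁')
  have n₁ := h₁.mul_star_self_eq
  have r₂ := h₂.2.2.1
  have r₂' := h₂.star_mul_star_eq
  have n₂ := h₂.star_mul_self_eq
  have hζ := zetaC_mul_conj q
  have hζ' := conj_zetaC_mul q
  fin_cases hi <;> fin_cases hj <;>
  · simp only [sum_neg_one_zero_one, vij, Int.reduceEq, Int.reduceNeg, if_true, if_false,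
      sigSq, vsig, ← Complex.mul_conj']
    simp only [pow_two, star_mul, star_add, star_sub, star_smul, star_star, Complex.star_def,
      smul_add, smul_sub, smul_neg, smul_smul,
      mul_add, add_mul, mul_sub, sub_mul, mul_neg, neg_mul, mul_one, one_mul,
      smul_mul_assoc, mul_smul_comm, mul_assoc,
      r₁, r₂, r₂', n₂, hc7, hc8, hc13, hc15,
      mul_mul_eq_of_mul_eq r₁, mul_mul_eq_of_mul_eq h₁', mul_mul_eq_of_mul_eq r₁',
      mul_mul_eq_of_mul_eq n₁,
      mul_mul_eq_of_mul_eq hc1, mul_mul_eq_of_mul_eq hc2, mul_mul_eq_of_mul_eq hc3,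
      mul_mul_eq_of_mul_eq hc4, mul_mul_eq_of_mul_eq hc5, mul_mul_eq_of_mul_eq hc6,
      mul_mul_eq_of_mul_eq hc7, mul_mul_eq_of_mul_eq hc8, mul_mul_eq_of_mul_eq hc9,
      mul_mul_eq_of_mul_eq hc10, mul_mul_eq_of_mul_eq hc11, mul_mul_eq_of_mul_eq hc12,
      mul_mul_eq_of_mul_eq hc13, mul_mul_eq_of_mul_eq hc14, mul_mul_eq_of_mul_eq hc15,
      mul_mul_eq_of_mul_eq hc16]
    match_scalars <;> grind

theorem stmt5_general (q : ℂ)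
    {A : Type*} [NormedRing A] [StarRing A] [CStarRing A] [NormedAlgebra ℂ A]
    [StarModule ℂ A] [CompleteSpace A]
    (α₁ γ₁ α₂ γ₂ : A) (h₁ : SUq2Rel q α₁ γ₁) (h₂ : SUq2Rel q α₂ γ₂)
    -- `α₂` commutes with `α₁, γ₁, α₁*, γ₁*`:
    (hc1 : α₂ * α₁ = α₁ * α₂) (hc2 : α₂ * γ₁ = γ₁ * α₂)
    (hc3 : α₂ * star α₁ = star α₁ * α₂) (hc4 : α₂ * star γ₁ = star γ₁ * α₂)
    -- `α₂*` commutes with `α₁, γ₁, α₁*, γ₁*`: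
    (hc5 : star α₂ * α₁ = α₁ * star α₂) (hc6 : star α₂ * γ₁ = γ₁ * star α₂)
    (hc7 : star α₂ * star α₁ = star α₁ * star α₂)
    (hc8 : star α₂ * star γ₁ = star γ₁ * star α₂)
    -- braided commutation of `γ₂` with the first pair:
    (hc9 : γ₂ * α₁ = α₁ * γ₂) (hc10 : γ₂ * star α₁ = star α₁ * γ₂)
    (hc11 : γ₂ * γ₁ = conj (zetaC q) • (γ₁ * γ₂))
    (hc12 : γ₂ * star γ₁ = zetaC q • (star γ₁ * γ₂))
    -- braided commutation of `γ₂*` with the first pair: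
    (hc13 : star γ₂ * α₁ = α₁ * star γ₂) (hc14 : star γ₂ * star α₁ = star α₁ * star γ₂)
    (hc15 : star γ₂ * γ₁ = zetaC q • (γ₁ * star γ₂))
    (hc16 : star γ₂ * star γ₁ = conj (zetaC q) • (star γ₁ * star γ₂)) :
    ∀ i ∈ ({-1, 0, 1} : Finset ℤ), ∀ j ∈ ({-1, 0, 1} : Finset ℤ),
      vij q (α₁ * α₂ - q • (star γ₁ * γ₂)) (γ₁ * α₂ + star α₁ * γ₂) i j
        = ∑ k ∈ ({-1, 0, 1} : Finset ℤ), vij q α₁ γ₁ i k * vij q α₂ γ₂ k j :=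
  fun _ hi _ hj => vij_comul h₁ h₂ h₁.mul_star_eq hc1 hc2 hc3 hc4 hc5 hc6 hc7 hc8 hc9 hc10
    hc11 hc12 hc13 hc14 hc15 hc16 hi hj

theorem stmt5 (q : ℂ) (hq0 : 0 < ‖q‖) (hq1 : ‖q‖ < 1)
    {A : Type*} [NormedRing A] [StarRing A] [CStarRing A] [NormedAlgebra ℂ A]
    [StarModule ℂ A] [CompleteSpace A]
    (α₁ γ₁ α₂ γ₂ : A) (h₁ : SUq2Rel q α₁ γ₁) (h₂ : SUq2Rel q α₂ γ₂)
    -- `α₂` commutes with `α₁, γ₁, α₁*, γ₁*`: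
    (hc1 : α₂ * α₁ = α₁ * α₂) (hc2 : α₂ * γ₁ = γ₁ * α₂)
    (hc3 : α₂ * star α₁ = star α₁ * α₂) (hc4 : α₂ * star γ₁ = star γ₁ * α₂)
    -- `α₂*` commutes with `α₁, γ₁, α₁*, γ₁*`:
    (hc5 : star α₂ * α₁ = α₁ * star α₂) (hc6 : star α₂ * γ₁ = γ₁ * star α₂)
    (hc7 : star α₂ * star α₁ = star α₁ * star α₂)
    (hc8 : star α₂ * star γ₁ = star γ₁ * star α₂)
    -- braided commutation of `γ₂` with the first pair:
    (hc9 : γ₂ * α₁ = α₁ * γ₂) (hc10 : γ₂ * star α₁ = star α₁ * γ₂)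
    (hc11 : γ₂ * γ₁ = conj (zetaC q) • (γ₁ * γ₂))
    (hc12 : γ₂ * star γ₁ = zetaC q • (star γ₁ * γ₂))
    -- braided commutation of `γ₂*` with the first pair:
    (hc13 : star γ₂ * α₁ = α₁ * star γ₂) (hc14 : star γ₂ * star α₁ = star α₁ * star γ₂)
    (hc15 : star γ₂ * γ₁ = zetaC q • (γ₁ * star γ₂))
    (hc16 : star γ₂ * star γ₁ = conj (zetaC q) • (star γ₁ * star γ₂)) :
    ∀ i ∈ ({-1, 0, 1} : Finset ℤ), ∀ j ∈ ({-1, 0, 1} : Finset ℤ),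
      vij q (α₁ * α₂ - q • (star γ₁ * γ₂)) (γ₁ * α₂ + star α₁ * γ₂) i j
        = ∑ k ∈ ({-1, 0, 1} : Finset ℤ), vij q α₁ γ₁ i k * vij q α₂ γ₂ k j :=
  stmt5_general q α₁ γ₁ α₂ γ₂ h₁ h₂ hc1 hc2 hc3 hc4 hc5 hc6 hc7 hc8 hc9 hc10 hc11 hc12 hc13 hc14
    hc15 hc16
end

section
/- Let A be a unital C*-algebra and let α, γ ∈ A satisfy the SU_q(2) relations; let v_{i,j} = v_{i,j}(α, γ). Then for all r, p ∈ {−1, 0, 1}: −ς·ζ^{r(p−1)}·v_{−1,r}v_{1,p} + (1 − ς²)·ζ^{rp}·v_{0,r}v_{0,p} + ς·ζ^{r(p+1)}·v_{1,r}v_{−1,p} equals 0 if r + p ∉ {−1, 0, 1}, and equals λ_{r,p}·v_{0,r+p} otherwise, where λ_{−1,0} = σ², λ_{−1,1} = −ς, λ_{0,−1} = −ςσ², λ_{0,0} = 1 − ς², λ_{0,1} = σ², λ_{1,−1} = ς, λ_{1,0} = −ςσ². -/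
open scoped ComplexConjugate

/-- The coefficients `λ_{r,p}` (and `0` for the two excluded index pairs). -/
noncomputable def lamRP (q : ℂ) (r p : ℤ) : ℂ :=
  if r = -1 ∧ p = 0 then sigSq q
  else if r = -1 ∧ p = 1 then -(vsig q)
  else if r = 0 ∧ p = -1 then -(vsig q * sigSq q)
  else if r = 0 ∧ p = 0 then 1 - vsig q ^ 2
  else if r = 0 ∧ p = 1 then sigSq q
  else if r = 1 ∧ p = -1 then vsig q
  else if r = 1 ∧ p = 0 then -(vsig q * sigSq q)
  else 0

set_option maxHeartbeats 1000000000 in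
theorem stmt8 (q : ℂ) (hq0 : 0 < ‖q‖) (hq1 : ‖q‖ < 1)
    {A : Type*} [NormedRing A] [StarRing A] [CStarRing A] [NormedAlgebra ℂ A]
    [StarModule ℂ A] [CompleteSpace A]
    (α γ : A) (h : SUq2Rel q α γ) :
    ∀ r ∈ ({-1, 0, 1} : Finset ℤ), ∀ p ∈ ({-1, 0, 1} : Finset ℤ),
      (-(vsig q) * zetaC q ^ (r * (p - 1))) • (vij q α γ (-1) r * vij q α γ 1 p)
        + ((1 - vsig q ^ 2) * zetaC q ^ (r * p)) • (vij q α γ 0 r * vij q α γ 0 p)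
        + (vsig q * zetaC q ^ (r * (p + 1))) • (vij q α γ 1 r * vij q α γ (-1) p)
      = if r + p ∈ ({-1, 0, 1} : Finset ℤ) then lamRP q r p • vij q α γ 0 (r + p)
        else 0 := by

  obtain ⟨h1, h2, h3, h4⟩ := h
  have hq : q ≠ 0 := by
    intro h0; simp [h0] at hq0
  have hqc : (starRingEnd ℂ) q ≠ 0 := by
    simpa using hq
  have hvs' : ((‖q‖ : ℂ)) ^ 2 = q * (starRingEnd ℂ) q := by
    rw [Complex.mul_conj]
    norm_cast
    exact Complex.sq_norm q
  have hvs : vsig q = q * (starRingEnd ℂ) q := hvs'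
  have hss : sigSq q = 1 + q * (starRingEnd ℂ) q := by rw [sigSq, hvs]
  rw [hvs'] at h2
  -- basic relations
  have rab : α * star α = 1 - (q * (starRingEnd ℂ) q) • (star γ * γ) := eq_sub_of_add_eq h2
  have rba : star α * α = 1 - star γ * γ := eq_sub_of_add_eq h1
  have rga : α * γ = (starRingEnd ℂ) q • (γ * α) := h3
  have rhbrev : star γ * star α = q • (star α * star γ) := by
    rw [← star_mul, h3, star_smul, star_mul, Complex.star_def, Complex.conj_conj]
  have rhb : star α * star γ = q⁻¹ • (star γ * star α) := by
    rw [rhbrev, smul_smul, inv_mul_cancel₀ hq, one_smul]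
  have rga' : ∀ x : A, α * (γ * x) = (starRingEnd ℂ) q • (γ * (α * x)) := fun x => by
    rw [← mul_assoc, rga, smul_mul_assoc, mul_assoc]
  have rhbrev' : ∀ x : A, star γ * (star α * x) = q • (star α * (star γ * x)) := fun x => by
    rw [← mul_assoc, rhbrev, smul_mul_assoc, mul_assoc]
  have rhb' : ∀ x : A, star α * (star γ * x) = q⁻¹ • (star γ * (star α * x)) := fun x => by
    rw [← mul_assoc, rhb, smul_mul_assoc, mul_assoc]
  have rab' : ∀ x : A, α * (star α * x) = x - (q * (starRingEnd ℂ) q) • (star γ * (γ * x)) := fun x => by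
    rw [← mul_assoc, rab, sub_mul, one_mul, smul_mul_assoc, mul_assoc]
  have rba' : ∀ x : A, star α * (α * x) = x - star γ * (γ * x) := fun x => by
    rw [← mul_assoc, rba, sub_mul, one_mul, mul_assoc]
  have rgh : γ * star γ = star γ * γ := h4
  have rgh' : ∀ x : A, γ * (star γ * x) = star γ * (γ * x) := fun x => by
    rw [← mul_assoc, rgh, mul_assoc]
  -- alpha commutes with c = star γ * γ up to ς
  have rca : α * (star γ * γ) = (q * (starRingEnd ℂ) q) • (star γ * γ * α) := by
    have hassoc := mul_assoc α (star α) α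
    rw [rab, rba, sub_mul, one_mul, mul_sub, mul_one, smul_mul_assoc] at hassoc
    exact (sub_right_inj.mp hassoc).symm
  have rca' : ∀ x : A, α * (star γ * (γ * x))
      = (q * (starRingEnd ℂ) q) • (star γ * (γ * (α * x))) := fun x => by
    rw [← mul_assoc (star γ) γ x, ← mul_assoc, rca, smul_mul_assoc,
      mul_assoc (star γ * γ), mul_assoc]
  -- the C*-derived relation: α * star γ = q • (star γ * α)
  have key : (α * star γ - q • (star γ * α)) * star (α * star γ - q • (star γ * α)) = 0 := by
    have hs : star (α * star γ - q • (star γ * α))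
        = γ * star α - (starRingEnd ℂ) q • (star α * γ) := by
      simp [star_sub, star_smul, star_mul, Complex.star_def]
    rw [hs]
    simp only [sub_mul, mul_sub, smul_mul_assoc, mul_smul_comm, smul_smul, smul_sub,
      mul_assoc, rca', rca, rga', rga, rhbrev', rhbrev, rab', rab, rgh', rgh,
      mul_one, one_mul]
    match_scalars <;> ring
  have rha : α * star γ = q • (star γ * α) := by
    have hn : ‖α * star γ - q • (star γ * α)‖ * ‖α * star γ - q • (star γ * α)‖ = 0 := by
      rw [← CStarRing.norm_self_mul_star, key, norm_zero]
    have h0 := norm_eq_zero.mp (mul_self_eq_zero.mp hn)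
    exact sub_eq_zero.mp h0
  have rha' : ∀ x : A, α * (star γ * x) = q • (star γ * (α * x)) := fun x => by
    rw [← mul_assoc, rha, smul_mul_assoc, mul_assoc]
  have rgbrev : γ * star α = (starRingEnd ℂ) q • (star α * γ) := by
    have hst := congrArg star rha
    rw [star_mul, star_star, star_smul, star_mul, star_star, Complex.star_def] at hst
    exact hst
  have rgb : star α * γ = ((starRingEnd ℂ) q)⁻¹ • (γ * star α) := by
    rw [rgbrev, smul_smul, inv_mul_cancel₀ hqc, one_smul]
  have rgb' : ∀ x : A, star α * (γ * x) = ((starRingEnd ℂ) q)⁻¹ • (γ * (star α * x)) := fun x => by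
    rw [← mul_assoc, rgb, smul_mul_assoc, mul_assoc]
  -- zeta powers
  have z0 : zetaC q ^ (0:ℤ) = 1 := zpow_zero _
  have z1p : zetaC q ^ (1:ℤ) = q * ((starRingEnd ℂ) q)⁻¹ := by
    rw [zpow_one, zetaC, div_eq_mul_inv]
  have z2p : zetaC q ^ (2:ℤ) = q ^ 2 * (((starRingEnd ℂ) q) ^ 2)⁻¹ := by
    rw [show (2:ℤ) = ((2:ℕ):ℤ) from rfl, zpow_natCast, zetaC, div_pow, div_eq_mul_inv]
  have zm1 : zetaC q ^ (-1:ℤ) = (starRingEnd ℂ) q * q⁻¹ := by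
    rw [zpow_neg, zpow_one, zetaC, inv_div, div_eq_mul_inv]
  have zm2 : zetaC q ^ (-2:ℤ) = ((starRingEnd ℂ) q) ^ 2 * (q ^ 2)⁻¹ := by
    rw [show (-2:ℤ) = -((2:ℕ):ℤ) from rfl, zpow_neg, zpow_natCast, zetaC, div_pow, inv_div,
      div_eq_mul_inv]
  intro r hr p hp
  fin_cases hr <;> fin_cases hp <;>
    · norm_num [vij, lamRP]
      try simp only [z0, z1p, z2p, zm1, zm2, zpow_neg, zpow_ofNat, zpow_one, zpow_zero]
      simp only [zetaC, div_eq_mul_inv, mul_inv, inv_inv, mul_pow, inv_pow, hvs, hss, pow_two]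
      simp only [sub_mul, mul_sub, smul_mul_assoc, mul_smul_comm, smul_smul, smul_sub,
        neg_mul, mul_neg, neg_smul, smul_neg, neg_neg, neg_sub,
        mul_assoc, rga', rga, rha', rha, rgb', rgb, rhb', rhb, rgh', rgh,
        rab', rab, rba', rba, mul_one, one_mul]
      match_scalars
      all_goals try (field_simp [hq, hqc]; try ring)
      all_goals try (field_simp [hq, hqc]; try ring)
      all_goals try ring
end

section
/- Let A be a unital C*-algebra and let α, γ ∈ A satisfy the SU_q(2) relations; let v_{i,j} = v_{i,j}(α, γ). Then for all r, p ∈ {−1, 0, 1}: σ²·ζ^{r(p−1)}·v_{0,r}v_{1,p} − ςσ²·ζ^{rp}·v_{1,r}v_{0,p} equals 0 if r + p ∉ {−1, 0, 1}, and equals λ_{r,p}·v_{1,r+p} otherwise, where λ_{−1,0} = σ², λ_{−1,1} = −ς, λ_{0,−1} = −ςσ², λ_{0,0} = 1 − ς², λ_{0,1} = σ², λ_{1,−1} = ς, λ_{1,0} = −ςσ². -/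
open scoped ComplexConjugate

/-!
In a C*-algebra the SU_q(2) relations also force `α γ* = q γ* α`: for `T := α γ* - q γ* α` the
other relations give `T* T = 0`, hence `T = 0`. Together with `α γ = q̄ γ α`, normality of `γ`,
`α* α = 1 - γ* γ` and `α α* = 1 - |q|² γ* γ`, these rules rewrite every product `v_{i,r} v_{j,p}`
as a combination of the ordered words `γ*ᵃ γᵇ αᶜ` and `γ*ᵃ γᵇ α*ᶜ`, so each of the nine identities
becomes a comparison of coefficients that are rational functions of `q` and `q̄`.
-/

theorem mul_mul_eq_sub_of_mul_eq_one_sub {A : Type*} [Ring A] {x y n : A} (h : x * y = 1 - n)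
    (z : A) : x * (y * z) = z - n * z := by
  rw [← mul_assoc, h, sub_mul, one_mul]

section QCommutation

variable {A : Type*} [Ring A] [Algebra ℂ A] {x y : A} {c : ℂ}

theorem mul_left_comm_of_mul_eq_smul (h : x * y = c • (y * x)) (z : A) :
    x * (y * z) = c • (y * (x * z)) := by
  rw [← mul_assoc, h, smul_mul_assoc, mul_assoc]

theorem mul_eq_inv_smul_of_mul_eq_smul (hc : c ≠ 0) (h : x * y = c • (y * x)) :
    y * x = c⁻¹ • (x * y) := by
  rw [h, smul_smul, inv_mul_cancel₀ hc, one_smul]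

theorem star_mul_star_eq_smul_of_mul_eq_smul [StarRing A] [StarModule ℂ A]
    (h : x * y = c • (y * x)) : star y * star x = conj c • (star x * star y) := by
  simpa only [star_mul, star_smul, Complex.star_def] using congrArg star h

end QCommutation

namespace SUq2Rel

section Algebraic

variable {A : Type*} [Ring A] [StarRing A] [Algebra ℂ A] {q : ℂ} {α γ : A}

theorem star_mul_self_alpha (h : SUq2Rel q α γ) : star α * α = 1 - star γ * γ :=
  eq_sub_of_add_eq h.1

theorem mul_star_self_alpha (h : SUq2Rel q α γ) :
    α * star α = 1 - (q * conj q) • (star γ * γ) := by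
  rw [Complex.mul_conj']; exact eq_sub_of_add_eq h.2.1

theorem star_alpha_mul_star_gamma [StarModule ℂ A] (hq : q ≠ 0) (h : SUq2Rel q α γ) :
    star α * star γ = q⁻¹ • (star γ * star α) := by
  refine mul_eq_inv_smul_of_mul_eq_smul hq ?_
  simpa only [Complex.conj_conj] using star_mul_star_eq_smul_of_mul_eq_smul h.2.2.1

theorem vij_twisted_commutator [StarModule ℂ A] (hq : q ≠ 0) (h : SUq2Rel q α γ)
    (hαγ' : α * star γ = q • (star γ * α)) {r p : ℤ} (hr : r ∈ ({-1, 0, 1} : Finset ℤ))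
    (hp : p ∈ ({-1, 0, 1} : Finset ℤ)) :
    (sigSq q * zetaC q ^ (r * (p - 1))) • (vij q α γ 0 r * vij q α γ 1 p)
        - (vsig q * sigSq q * zetaC q ^ (r * p)) • (vij q α γ 1 r * vij q α γ 0 p)
      = if r + p ∈ ({-1, 0, 1} : Finset ℤ) then lamRP q r p • vij q α γ 1 (r + p)
        else 0 := by
  have hqc : conj q ≠ 0 := (map_ne_zero _).mpr hq
  have hα'γ' := h.star_alpha_mul_star_gamma hq
  have hα'γ : star α * γ = (conj q)⁻¹ • (γ * star α) :=
    mul_eq_inv_smul_of_mul_eq_smul hqc <| by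
      simpa only [star_star] using star_mul_star_eq_smul_of_mul_eq_smul hαγ'
  have hα'α := h.star_mul_self_alpha
  have hαα' := h.mul_star_self_alpha
  have hvsig : vsig q = q * conj q := (Complex.mul_conj' q).symm
  fin_cases hr <;> fin_cases hp <;>
  · norm_num [vij, lamRP, zpow_neg, pow_two, mul_inv]
    simp only [mul_sub, sub_mul, mul_one, one_mul, smul_mul_assoc, mul_smul_comm, smul_smul,
      smul_sub, sub_smul, mul_assoc, h.2.2.1, mul_left_comm_of_mul_eq_smul h.2.2.1,
      hα'γ, mul_left_comm_of_mul_eq_smul hα'γ, mul_left_comm_of_mul_eq_smul hα'γ',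
      Commute.left_comm h.2.2.2, hα'α, hαα', mul_mul_eq_sub_of_mul_eq_one_sub hαα']
    match_scalars <;> simp only [zetaC, sigSq, hvsig] <;> field_simp <;> ring

end Algebraic

theorem mul_star_gamma {A : Type*} [NormedRing A] [StarRing A] [CStarRing A] [NormedAlgebra ℂ A]
    [StarModule ℂ A] {q : ℂ} {α γ : A} (hq : q ≠ 0) (h : SUq2Rel q α γ) :
    α * star γ = q • (star γ * α) := by
  have hγα := mul_eq_inv_smul_of_mul_eq_smul ((map_ne_zero _).mpr hq) h.2.2.1
  have hα'γ' := h.star_alpha_mul_star_gamma hq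
  have hα'α := h.star_mul_self_alpha
  refine sub_eq_zero.mp ((CStarRing.star_mul_self_eq_zero_iff _).mp ?_)
  simp only [star_sub, star_mul, star_smul, star_star, Complex.star_def, mul_sub, sub_mul,
    smul_mul_assoc, mul_smul_comm, smul_smul, smul_sub, mul_assoc, hγα,
    mul_left_comm_of_mul_eq_smul hγα, mul_left_comm_of_mul_eq_smul hα'γ', h.2.2.2,
    Commute.left_comm h.2.2.2, hα'α, mul_mul_eq_sub_of_mul_eq_one_sub hα'α, mul_one]
  match_scalars <;> (field_simp; try ring)

end SUq2Rel

theorem stmt9_general (q : ℂ) (hq0 : 0 < ‖q‖)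
    {A : Type*} [NormedRing A] [StarRing A] [CStarRing A] [NormedAlgebra ℂ A]
    [StarModule ℂ A]
    (α γ : A) (h : SUq2Rel q α γ) :
    ∀ r ∈ ({-1, 0, 1} : Finset ℤ), ∀ p ∈ ({-1, 0, 1} : Finset ℤ),
      (sigSq q * zetaC q ^ (r * (p - 1))) • (vij q α γ 0 r * vij q α γ 1 p)
        - (vsig q * sigSq q * zetaC q ^ (r * p)) • (vij q α γ 1 r * vij q α γ 0 p)
      = if r + p ∈ ({-1, 0, 1} : Finset ℤ) then lamRP q r p • vij q α γ 1 (r + p)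
        else 0 := by
  have hq : q ≠ 0 := norm_pos_iff.mp hq0
  intro r hr p hp
  exact h.vij_twisted_commutator hq (h.mul_star_gamma hq) hr hp

theorem stmt9 (q : ℂ) (hq0 : 0 < ‖q‖) (hq1 : ‖q‖ < 1)
    {A : Type*} [NormedRing A] [StarRing A] [CStarRing A] [NormedAlgebra ℂ A]
    [StarModule ℂ A] [CompleteSpace A]
    (α γ : A) (h : SUq2Rel q α γ) :
    ∀ r ∈ ({-1, 0, 1} : Finset ℤ), ∀ p ∈ ({-1, 0, 1} : Finset ℤ),
      (sigSq q * zetaC q ^ (r * (p - 1))) • (vij q α γ 0 r * vij q α γ 1 p)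
        - (vsig q * sigSq q * zetaC q ^ (r * p)) • (vij q α γ 1 r * vij q α γ 0 p)
      = if r + p ∈ ({-1, 0, 1} : Finset ℤ) then lamRP q r p • vij q α γ 1 (r + p)
        else 0 :=
  stmt9_general q hq0 α γ h
end

section
/- Let A be a unital C*-algebra, let α, γ ∈ A satisfy the SU_q(2) relations, and let e_{−1}, e_0, e_1 ∈ A braided-commute with (α, γ) and satisfy e_i* = e_{−i} for i ∈ {−1, 0, 1}. Define P_i = Σ_{k ∈ {−1,0,1}} v_{i,k}(α, γ)·e_k. Then P_i* = P_{−i} for all i ∈ {−1, 0, 1}. -/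
open scoped ComplexConjugate

/-- Elements `e_{-1}, e_0, e_1` (given as `e (-1), e 0, e 1`) braided-commute with `(α, γ)`. -/
def BraidedComm {A : Type*} [Ring A] [StarRing A] [Module ℂ A]
    (q : ℂ) (α γ : A) (e : ℤ → A) : Prop :=
  ∀ r ∈ ({-1, 0, 1} : Finset ℤ),
    e r * α = α * e r ∧ e r * star α = star α * e r ∧
    e r * γ = (conj (zetaC q)) ^ r • (γ * e r) ∧
    e r * star γ = (zetaC q) ^ r • (star γ * e r)

lemma sum3 {A : Type*} [AddCommMonoid A] (f : ℤ → A) :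
    ∑ k ∈ ({-1, 0, 1} : Finset ℤ), f k = f (-1) + f 0 + f 1 := by
  have h : ({-1, 0, 1} : Finset ℤ) = insert (-1) (insert 0 {1}) := rfl
  rw [h, Finset.sum_insert (by decide), Finset.sum_insert (by decide),
    Finset.sum_singleton, add_assoc]

theorem stmt11 (q : ℂ) (hq0 : 0 < ‖q‖) (hq1 : ‖q‖ < 1)
    {A : Type*} [NormedRing A] [StarRing A] [CStarRing A] [NormedAlgebra ℂ A]
    [StarModule ℂ A] [CompleteSpace A]
    (α γ : A) (h : SUq2Rel q α γ) (e : ℤ → A) (hb : BraidedComm q α γ e)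
    (hstar : ∀ i ∈ ({-1, 0, 1} : Finset ℤ), star (e i) = e (-i)) :
    ∀ i ∈ ({-1, 0, 1} : Finset ℤ),
      star (∑ k ∈ ({-1, 0, 1} : Finset ℤ), vij q α γ i k * e k)
        = ∑ k ∈ ({-1, 0, 1} : Finset ℤ), vij q α γ (-i) k * e k := by
  -- basic nonvanishing facts
  have hq : q ≠ 0 := by
    intro h'; rw [h'] at hq0; simp at hq0
  have hcq : (conj q : ℂ) ≠ 0 := by
    simpa using (star_ne_zero (R := ℂ)).2 hq
  have hzz : zetaC q * conj (zetaC q) = 1 := by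
    simp only [zetaC, map_div₀, Complex.conj_conj]
    field_simp
  have hz : zetaC q ≠ 0 := by
    intro h'; rw [h', zero_mul] at hzz; exact zero_ne_one hzz
  have hinvc : (conj (zetaC q))⁻¹ = zetaC q :=
    inv_eq_of_mul_eq_one_left hzz
  have hcz : conj (zetaC q) = (zetaC q)⁻¹ :=
    eq_inv_of_mul_eq_one_left (by rw [mul_comm]; exact hzz)
  have hσ : conj (sigSq q) = sigSq q := by
    simp [sigSq, vsig, map_add, map_pow, Complex.conj_ofReal]
  -- braided commutation facts, simplified
  obtain ⟨hm1α, hm1α', hm1γ, hm1γ'⟩ := hb (-1) (by decide)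
  obtain ⟨h0α, h0α', h0γ, h0γ'⟩ := hb 0 (by decide)
  obtain ⟨h1α, h1α', h1γ, h1γ'⟩ := hb 1 (by decide)
  rw [zpow_neg_one, hinvc] at hm1γ
  rw [zpow_neg_one] at hm1γ'
  rw [zpow_zero, one_smul] at h0γ
  rw [zpow_zero, one_smul] at h0γ'
  rw [zpow_one, hcz] at h1γ
  rw [zpow_one] at h1γ'
  -- squared versions
  have hm1γ2 : e (-1) * γ ^ 2 = (zetaC q ^ 2) • (γ ^ 2 * e (-1)) := by
    rw [sq, ← mul_assoc, hm1γ, smul_mul_assoc, mul_assoc, hm1γ, mul_smul_comm,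
      smul_smul, sq, mul_assoc]
  have h1sγ2 : e 1 * star γ ^ 2 = (zetaC q ^ 2) • (star γ ^ 2 * e 1) := by
    rw [sq, ← mul_assoc, h1γ', smul_mul_assoc, mul_assoc, h1γ', mul_smul_comm,
      smul_smul, sq, mul_assoc]
  have hem1 : star (e 1) = e (-1) := hstar 1 (by decide)
  have he0 : star (e 0) = e 0 := by simpa using hstar 0 (by decide)
  have he1 : star (e (-1)) = e 1 := by simpa using hstar (-1) (by decide)
  -- scalar identities
  have hs1 : conj q * zetaC q ^ 2 = q * zetaC q := by
    simp only [zetaC]; field_simp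
  have hs2 : conj (q * zetaC q) * zetaC q ^ 2 = q := by
    simp only [zetaC, map_mul, map_div₀, Complex.conj_conj]; field_simp
  intro i hi
  fin_cases hi
  · -- i = -1
    rw [sum3, sum3]
    show star (α ^ 2 * e (-1) + -(sigSq q • (star γ * α)) * e 0 + -(q • star γ ^ 2) * e 1)
      = -((q * zetaC q) • γ ^ 2) * e (-1) + -(sigSq q • (star α * γ)) * e 0 + star α ^ 2 * e 1
    have t1 : star (α ^ 2 * e (-1)) = star α ^ 2 * e 1 := by
      rw [star_mul, he1, star_pow, sq, ← mul_assoc, h1α', mul_assoc, h1α',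
        ← mul_assoc, ← sq]
    have t2 : star (-(sigSq q • (star γ * α)) * e 0)
        = -(sigSq q • (star α * γ)) * e 0 := by
      rw [star_mul, star_neg, star_smul, star_mul, star_star, Complex.star_def, hσ, he0, mul_neg,
        mul_smul_comm, ← mul_assoc, h0α', mul_assoc, h0γ, ← mul_assoc,
        ← smul_mul_assoc, ← neg_mul]
    have t3 : star (-(q • star γ ^ 2) * e 1)
        = -((q * zetaC q) • γ ^ 2) * e (-1) := by
      rw [star_mul, star_neg, star_smul, star_pow, star_star, Complex.star_def, hem1, mul_neg,
        mul_smul_comm, hm1γ2, smul_smul, hs1, ← smul_mul_assoc, ← neg_mul]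
    rw [star_add, star_add, t1, t2, t3]
    abel
  · -- i = 0
    rw [sum3, sum3]
    show star (zetaC q • (α * γ) * e (-1) + (1 - sigSq q • (star γ * γ)) * e 0
        + star γ * star α * e 1)
      = zetaC q • (α * γ) * e (-1) + (1 - sigSq q • (star γ * γ)) * e 0 + star γ * star α * e 1
    have t1 : star (zetaC q • (α * γ) * e (-1)) = star γ * star α * e 1 := by
      rw [star_mul, he1, star_smul, Complex.star_def, star_mul, mul_smul_comm, ← mul_assoc, h1γ',
        smul_mul_assoc, smul_smul, mul_comm (conj (zetaC q)), hzz, one_smul,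
        mul_assoc, h1α', ← mul_assoc]
    have t2 : star ((1 - sigSq q • (star γ * γ)) * e 0)
        = (1 - sigSq q • (star γ * γ)) * e 0 := by
      rw [star_mul, he0, star_sub, star_one, star_smul, Complex.star_def, star_mul, star_star, hσ,
        mul_sub, mul_one, sub_mul, one_mul, mul_smul_comm, ← mul_assoc, h0γ',
        mul_assoc, h0γ, ← mul_assoc, smul_mul_assoc]
    have t3 : star (star γ * star α * e 1)
        = zetaC q • (α * γ) * e (-1) := by
      rw [star_mul, hem1, star_mul, star_star, star_star, ← mul_assoc, hm1α,
        mul_assoc, hm1γ, mul_smul_comm, ← mul_assoc, ← smul_mul_assoc]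
    rw [star_add, star_add, t1, t2, t3]
    abel
  · -- i = 1
    rw [sum3, sum3]
    show star (-((q * zetaC q) • γ ^ 2) * e (-1) + -(sigSq q • (star α * γ)) * e 0
        + star α ^ 2 * e 1)
      = α ^ 2 * e (-1) + -(sigSq q • (star γ * α)) * e 0 + -(q • star γ ^ 2) * e 1
    have t1 : star (-((q * zetaC q) • γ ^ 2) * e (-1))
        = -(q • star γ ^ 2) * e 1 := by
      rw [star_mul, he1, star_neg, star_smul, Complex.star_def, star_pow, mul_neg, mul_smul_comm,
        h1sγ2, smul_smul, hs2, ← smul_mul_assoc, ← neg_mul]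
    have t2 : star (-(sigSq q • (star α * γ)) * e 0)
        = -(sigSq q • (star γ * α)) * e 0 := by
      rw [star_mul, star_neg, star_smul, star_mul, star_star, Complex.star_def, hσ, he0, mul_neg,
        mul_smul_comm, ← mul_assoc, h0γ', mul_assoc, h0α, ← mul_assoc,
        ← smul_mul_assoc, ← neg_mul]
    have t3 : star (star α ^ 2 * e 1) = α ^ 2 * e (-1) := by
      rw [star_mul, hem1, star_pow, star_star, sq, ← mul_assoc, hm1α,
        mul_assoc, hm1α, ← mul_assoc, ← sq]
    rw [star_add, star_add, t1, t2, t3]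
    abel
end

section
/- Let H = ℓ²(ℕ × ℤ; ℂ) with standard orthonormal basis (δ_{n,k})_{n ∈ ℕ, k ∈ ℤ}. There exist bounded linear operators a, g on H such that for all n ∈ ℕ and k ∈ ℤ: a(δ_{n+1,k}) = √(1 − |q|^{2(n+1)})·δ_{n,k}, a(δ_{0,k}) = 0, and g(δ_{n,k}) = conj(q)^n·δ_{n,k+1}; moreover any such a, g satisfy the SU_q(2) relations: a*a + g*g = 1, aa* + |q|²g*g = 1, ag = conj(q)·ga, and gg* = g*g. -/
/-!
Both operators are built from two bounded operations on `ℓ²`: precomposition with an injective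
map of the index set, and multiplication by a bounded weight. Thus `a` is the weighted backward
shift `δ_{n+1,k} ↦ √(1 - |q|^{2(n+1)}) δ_{n,k}` and `g` the shift `δ_{n,k} ↦ δ_{n,k+1}` weighted by
`conj(q)^n`, both of norm at most `1`.

For the relations, a bounded operator on `ℓ²` is determined by its values on the basis, and the
matrix of the adjoint is the conjugate transpose. Hence `a* δ_{n,k} = √(1 - |q|^{2(n+1)}) δ_{n+1,k}`
and `g* δ_{n,k} = q^n δ_{n,k-1}`, and on each `δ_{n,k}` the four relations become scalar identities,
the first two being `(1 - |q|^{2n}) + |q|^{2n} = 1`.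
-/

open scoped ENNReal lp ComplexConjugate

section

variable {α β 𝕜 E : Type*} {p : ℝ≥0∞} [NormedAddCommGroup E]

theorem Memℓp.comp_injective {f : α → E} (hf : Memℓp f p) {σ : β → α} (hσ : σ.Injective) :
    Memℓp (f ∘ σ) p := by
  rcases p.trichotomy with rfl | rfl | hp
  · exact memℓp_zero (hf.finite_dsupport.preimage hσ.injOn)
  · exact memℓp_infty (hf.bddAbove.mono (Set.range_comp_subset_range σ (‖f ·‖)))
  · exact memℓp_gen ((hf.summable hp).comp_injective hσ)

namespace lp

theorem norm_comp_injective_le [Fact (1 ≤ p)] (f : ℓ^p(α, E)) {σ : β → α} (hσ : σ.Injective) :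
    ‖(⟨f ∘ σ, (lp.memℓp f).comp_injective hσ⟩ : ℓ^p(β, E))‖ ≤ ‖f‖ := by
  rcases p.dichotomy with rfl | hp
  · exact norm_le_of_forall_le (norm_nonneg f) fun i => norm_apply_le_norm (by simp) f (σ i)
  · have hp : 0 < p.toReal := zero_lt_one.trans_le hp
    refine norm_le_of_tsum_le hp (norm_nonneg f) ?_
    rw [norm_rpow_eq_tsum hp]
    exact tsum_comp_le_tsum_of_inj ((lp.memℓp f).summable hp) (fun _ => by positivity) hσ

section Operators

variable [NontriviallyNormedField 𝕜] [NormedSpace 𝕜 E] [Fact (1 ≤ p)]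

variable (𝕜 E p) in
noncomputable def compCLM {σ : β → α} (hσ : σ.Injective) : ℓ^p(α, E) →L[𝕜] ℓ^p(β, E) :=
  LinearMap.mkContinuous
    { toFun f := ⟨f ∘ σ, (lp.memℓp f).comp_injective hσ⟩
      map_add' _ _ := rfl
      map_smul' _ _ := rfl }
    1 fun f => (one_mul ‖f‖).symm ▸ norm_comp_injective_le f hσ

@[simp]
theorem compCLM_apply {σ : β → α} (hσ : σ.Injective) (f : ℓ^p(α, E)) (i : β) :
    compCLM 𝕜 E p hσ f i = f (σ i) := rfl

variable [DecidableEq α]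

theorem compCLM_single_of_apply_eq [DecidableEq β] {σ : β → α} (hσ : σ.Injective) {i : β} {j : α}
    (hij : σ i = j) (x : E) : compCLM 𝕜 E p hσ (lp.single p j x) = lp.single p i x := by
  ext i'
  subst hij
  simp only [compCLM_apply, lp.single_apply, Pi.single_apply, hσ.eq_iff]

theorem compCLM_single_of_notMem_range {σ : β → α} (hσ : σ.Injective) {j : α}
    (hj : j ∉ Set.range σ) (x : E) : compCLM 𝕜 E p hσ (lp.single p j x) = 0 := by
  ext i
  simp only [compCLM_apply, lp.single_apply, coeFn_zero, Pi.zero_apply]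
  exact Pi.single_eq_of_ne (fun h => hj ⟨i, h⟩) (M := fun _ => E) x

variable (E p) in
noncomputable def diagonal (w : α → 𝕜) {K : ℝ} (hK : 0 ≤ K) (hw : ∀ i, ‖w i‖ ≤ K) :
    ℓ^p(α, E) →L[𝕜] ℓ^p(α, E) :=
  mapCLM p (fun i => w i • ContinuousLinearMap.id 𝕜 E) hK fun i =>
    (norm_smul_le _ _).trans <|
      (mul_le_of_le_one_right (norm_nonneg _) ContinuousLinearMap.norm_id_le).trans (hw i)

theorem diagonal_single (w : α → 𝕜) {K : ℝ} (hK : 0 ≤ K) (hw : ∀ i, ‖w i‖ ≤ K) (i : α) (x : E) :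
    diagonal E p w hK hw (lp.single p i x) = w i • lp.single p i x := by
  rw [← lp.single_smul]
  ext j
  by_cases h : j = i
  · subst h; simp [diagonal]
  · simp [diagonal, h]

theorem ext_single {F : Type*} [AddCommMonoid F] [Module 𝕜 F] [TopologicalSpace F] [T2Space F]
    (hp : p ≠ ∞) {T S : ℓ^p(α, 𝕜) →L[𝕜] F} (h : ∀ i, T (lp.single p i 1) = S (lp.single p i 1)) :
    T = S :=
  ext_continuousLinearMap hp fun i => ContinuousLinearMap.ext_ring (h i)

end Operators

theorem star_apply_single_apply [RCLike 𝕜] [DecidableEq α] (T : ℓ²(α, 𝕜) →L[𝕜] ℓ²(α, 𝕜))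
    (i j : α) : star T (lp.single 2 j 1) i = conj (T (lp.single 2 i 1) j) := by
  have h := T.adjoint_inner_right (lp.single 2 i 1) (lp.single 2 j 1)
  rw [inner_single_left, inner_single_right] at h
  simpa [ContinuousLinearMap.star_eq_adjoint] using h

end lp

end

namespace SUq2

open lp

variable {q : ℂ}

noncomputable def weight (q : ℂ) (n : ℕ) : ℝ := √(1 - ‖q‖ ^ (2 * n))

theorem norm_weight_le_one (n : ℕ) : ‖(weight q n : ℂ)‖ ≤ 1 := by
  rw [Complex.norm_real, weight, Real.norm_of_nonneg (Real.sqrt_nonneg _)]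
  exact Real.sqrt_le_one.2 (sub_le_self _ (by positivity))

theorem weight_mul_weight (hq : ‖q‖ ≤ 1) (n : ℕ) :
    (weight q n : ℂ) * weight q n = 1 - (‖q‖ : ℂ) ^ (2 * n) := by
  have h : weight q n * weight q n = 1 - ‖q‖ ^ (2 * n) :=
    Real.mul_self_sqrt (sub_nonneg.2 (pow_le_one₀ (norm_nonneg q) hq))
  exact_mod_cast h

theorem conj_pow_mul_pow (q : ℂ) (n : ℕ) : conj q ^ n * q ^ n = (‖q‖ : ℂ) ^ (2 * n) := by
  rw [← mul_pow, Complex.conj_mul', pow_mul]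

-- The generators `a` and `g` of `C(SU_q(2))` in its standard representation on
-- `ℓ²(ℕ × ℤ) ≅ ℓ²(ℕ) ⊗ ℓ²(ℤ)`.
def IsStandardA (q : ℂ) (a : ℓ²(ℕ × ℤ, ℂ) →L[ℂ] ℓ²(ℕ × ℤ, ℂ)) : Prop :=
  (∀ (n : ℕ) (k : ℤ),
    a (lp.single 2 (n + 1, k) 1) = (weight q (n + 1) : ℂ) • lp.single 2 (n, k) 1) ∧
  ∀ k : ℤ, a (lp.single 2 (0, k) 1) = 0

def IsStandardG (q : ℂ) (g : ℓ²(ℕ × ℤ, ℂ) →L[ℂ] ℓ²(ℕ × ℤ, ℂ)) : Prop :=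
  ∀ (n : ℕ) (k : ℤ), g (lp.single 2 (n, k) 1) = conj q ^ n • lp.single 2 (n, k + 1) 1

noncomputable def opA (q : ℂ) : ℓ²(ℕ × ℤ, ℂ) →L[ℂ] ℓ²(ℕ × ℤ, ℂ) :=
  diagonal ℂ 2 (fun i => (weight q (i.1 + 1) : ℂ)) zero_le_one (fun _ => norm_weight_le_one _) ∘L
    compCLM ℂ ℂ 2 ((add_left_injective 1).prodMap Function.injective_id)

noncomputable def opG (hq : ‖q‖ ≤ 1) : ℓ²(ℕ × ℤ, ℂ) →L[ℂ] ℓ²(ℕ × ℤ, ℂ) :=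
  diagonal ℂ 2 (fun i => conj q ^ i.1) zero_le_one
      (fun _ => by simpa using pow_le_one₀ (norm_nonneg q) hq) ∘L
    compCLM ℂ ℂ 2 (Function.injective_id.prodMap (sub_left_injective (b := 1)))

theorem isStandardA_opA : IsStandardA q (opA q) := by
  refine ⟨fun n k => ?_, fun k => ?_⟩
  · rw [opA, ContinuousLinearMap.comp_apply,
      compCLM_single_of_apply_eq _ (i := (n, k)) (j := (n + 1, k)) rfl, diagonal_single]
  · rw [opA, ContinuousLinearMap.comp_apply, compCLM_single_of_notMem_range, map_zero]
    rintro ⟨⟨n, l⟩, h⟩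
    simp at h

theorem isStandardG_opG (hq : ‖q‖ ≤ 1) : IsStandardG q (opG hq) := by
  intro n k
  rw [opG, ContinuousLinearMap.comp_apply, compCLM_single_of_apply_eq _ (i := (n, k + 1)) (by simp),
    diagonal_single]

variable {a g : ℓ²(ℕ × ℤ, ℂ) →L[ℂ] ℓ²(ℕ × ℤ, ℂ)}

theorem IsStandardA.star_apply_single (ha : IsStandardA q a) (n : ℕ) (k : ℤ) :
    star a (lp.single 2 (n, k) 1) = (weight q (n + 1) : ℂ) • lp.single 2 (n + 1, k) 1 := by
  ext ⟨m, l⟩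
  rw [star_apply_single_apply, lp.coeFn_smul]
  cases m with
  | zero => simp [ha.2]
  | succ m =>
    rw [ha.1, lp.coeFn_smul]
    by_cases h : m = n ∧ l = k
    · obtain ⟨rfl, rfl⟩ := h
      simp
    · simp [h]

theorem IsStandardG.star_apply_single (hg : IsStandardG q g) (n : ℕ) (k : ℤ) :
    star g (lp.single 2 (n, k) 1) = q ^ n • lp.single 2 (n, k - 1) 1 := by
  ext ⟨m, l⟩
  rw [star_apply_single_apply]
  by_cases h : m = n ∧ l = k - 1
  · obtain ⟨rfl, rfl⟩ := h
    simp [hg m (k - 1)]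
  · have h' : ¬(n = m ∧ k = l + 1) := by omega
    simp [hg m l, h, h']

theorem star_mul_self_add_star_mul_self (hq : ‖q‖ ≤ 1) (ha : IsStandardA q a)
    (hg : IsStandardG q g) : star a * a + star g * g = 1 := by
  refine ext_single (by simp) fun ⟨n, k⟩ => ?_
  simp only [add_apply, mul_apply_eq_comp, one_apply_eq_self, hg _, map_smul, hg.star_apply_single,
    add_sub_cancel_right, smul_smul]
  cases n with
  | zero => simp [ha.2]
  | succ n =>
    rw [ha.1, map_smul, ha.star_apply_single, smul_smul, ← add_smul, weight_mul_weight hq,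
      conj_pow_mul_pow, sub_add_cancel, one_smul]

theorem mul_star_self_add_smul_star_mul_self (hq : ‖q‖ ≤ 1) (ha : IsStandardA q a)
    (hg : IsStandardG q g) : a * star a + ((‖q‖ : ℂ) ^ 2) • (star g * g) = 1 := by
  refine ext_single (by simp) fun ⟨n, k⟩ => ?_
  simp only [add_apply, mul_apply_eq_comp, smul_apply, one_apply_eq_self, hg _, map_smul,
    hg.star_apply_single, add_sub_cancel_right, smul_smul, ha.star_apply_single, ha.1, ← add_smul,
    weight_mul_weight hq, conj_pow_mul_pow]
  convert one_smul ℂ _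
  ring

theorem mul_eq_conj_smul_mul (ha : IsStandardA q a) (hg : IsStandardG q g) :
    a * g = conj q • (g * a) := by
  refine ext_single (by simp) fun ⟨n, k⟩ => ?_
  simp only [mul_apply_eq_comp, smul_apply, hg _, map_smul]
  cases n with
  | zero => simp [ha.2]
  | succ n =>
    rw [ha.1, ha.1, map_smul, hg, smul_smul, smul_smul, smul_smul]
    congr 1
    ring

theorem mul_star_self_eq_star_mul_self (hg : IsStandardG q g) : g * star g = star g * g := by
  refine ext_single (by simp) fun ⟨n, k⟩ => ?_
  simp only [mul_apply_eq_comp, hg _, map_smul, hg.star_apply_single, smul_smul,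
    add_sub_cancel_right, sub_add_cancel, mul_comm]

end SUq2

theorem stmt15_general (q : ℂ) (hq1 : ‖q‖ < 1) :
    (∃ a g : lp (fun _ : ℕ × ℤ => ℂ) 2 →L[ℂ] lp (fun _ : ℕ × ℤ => ℂ) 2,
      (∀ (n : ℕ) (k : ℤ),
        a (lp.single 2 (n + 1, k) 1)
          = ((Real.sqrt (1 - ‖q‖ ^ (2 * (n + 1))) : ℝ) : ℂ) •
              lp.single 2 (n, k) 1) ∧
      (∀ k : ℤ, a (lp.single 2 (0, k) 1) = 0) ∧
      (∀ (n : ℕ) (k : ℤ),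
        g (lp.single 2 (n, k) 1) = (conj q) ^ n • lp.single 2 (n, k + 1) 1)) ∧
    (∀ a g : lp (fun _ : ℕ × ℤ => ℂ) 2 →L[ℂ] lp (fun _ : ℕ × ℤ => ℂ) 2,
      (∀ (n : ℕ) (k : ℤ),
        a (lp.single 2 (n + 1, k) 1)
          = ((Real.sqrt (1 - ‖q‖ ^ (2 * (n + 1))) : ℝ) : ℂ) •
              lp.single 2 (n, k) 1) →
      (∀ k : ℤ, a (lp.single 2 (0, k) 1) = 0) →
      (∀ (n : ℕ) (k : ℤ),
        g (lp.single 2 (n, k) 1) = (conj q) ^ n • lp.single 2 (n, k + 1) 1) →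
      (star a * a + star g * g = 1 ∧
       a * star a + ((‖q‖ : ℂ) ^ 2) • (star g * g) = 1 ∧
       a * g = conj q • (g * a) ∧
       g * star g = star g * g)) := by
  open SUq2 in
  refine ⟨⟨opA q, opG hq1.le, isStandardA_opA.1, isStandardA_opA.2, isStandardG_opG hq1.le⟩,
    fun a g ha ha0 hg => ?_⟩
  have hA : IsStandardA q a := ⟨ha, ha0⟩
  exact ⟨star_mul_self_add_star_mul_self hq1.le hA hg,
    mul_star_self_add_smul_star_mul_self hq1.le hA hg, mul_eq_conj_smul_mul hA hg,
    mul_star_self_eq_star_mul_self hg⟩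

theorem stmt15 (q : ℂ) (hq0 : 0 < ‖q‖) (hq1 : ‖q‖ < 1) :
    (∃ a g : lp (fun _ : ℕ × ℤ => ℂ) 2 →L[ℂ] lp (fun _ : ℕ × ℤ => ℂ) 2,
      (∀ (n : ℕ) (k : ℤ),
        a (lp.single 2 (n + 1, k) 1)
          = ((Real.sqrt (1 - ‖q‖ ^ (2 * (n + 1))) : ℝ) : ℂ) •
              lp.single 2 (n, k) 1) ∧
      (∀ k : ℤ, a (lp.single 2 (0, k) 1) = 0) ∧
      (∀ (n : ℕ) (k : ℤ),
        g (lp.single 2 (n, k) 1) = (conj q) ^ n • lp.single 2 (n, k + 1) 1)) ∧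
    (∀ a g : lp (fun _ : ℕ × ℤ => ℂ) 2 →L[ℂ] lp (fun _ : ℕ × ℤ => ℂ) 2,
      (∀ (n : ℕ) (k : ℤ),
        a (lp.single 2 (n + 1, k) 1)
          = ((Real.sqrt (1 - ‖q‖ ^ (2 * (n + 1))) : ℝ) : ℂ) •
              lp.single 2 (n, k) 1) →
      (∀ k : ℤ, a (lp.single 2 (0, k) 1) = 0) →
      (∀ (n : ℕ) (k : ℤ),
        g (lp.single 2 (n, k) 1) = (conj q) ^ n • lp.single 2 (n, k + 1) 1) →
      (star a * a + star g * g = 1 ∧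
       a * star a + ((‖q‖ : ℂ) ^ 2) • (star g * g) = 1 ∧
       a * g = conj q • (g * a) ∧
       g * star g = star g * g)) :=
  stmt15_general q hq1
end

section
/- Let H = ℓ²(ℕ × ℤ; ℂ) with standard orthonormal basis (δ_{n,k}), and let a, g be bounded operators on H satisfying a(δ_{n+1,k}) = √(1 − |q|^{2(n+1)})·δ_{n,k}, a(δ_{0,k}) = 0, and g(δ_{n,k}) = conj(q)^n·δ_{n,k+1} for all n ∈ ℕ, k ∈ ℤ. Then the nine operators v_{i,j}(a, g), for i, j ∈ {−1, 0, 1}, are linearly independent over ℂ in the algebra of bounded operators on H. -/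
open scoped ComplexConjugate

noncomputable abbrev H := lp (fun _ : ℕ × ℤ => ℂ) 2

noncomputable def E (p : ℕ × ℤ) : H := lp.single 2 p 1

lemma coord_eq_inner (f : H) (p : ℕ × ℤ) : f p = @inner ℂ _ _ (E p) f := by
  rw [E, lp.inner_single_left]
  simp [RCLike.inner_apply]

lemma ext_of_inner {f g : H} (h : ∀ p, @inner ℂ _ _ (E p) f = @inner ℂ _ _ (E p) g) :
    f = g := by
  apply lp.ext
  funext p
  rw [coord_eq_inner f p, coord_eq_inner g p, h]

lemma inner_EE (p p' : ℕ × ℤ) :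
    @inner ℂ _ _ (E p) (E p') = if p' = p then 1 else 0 := by
  rw [E, E, lp.inner_single_left, lp.single_apply]
  split_ifs <;> simp_all [RCLike.inner_apply, eq_comm]

@[simp] lemma norm_E (p : ℕ × ℤ) : ‖E p‖ = 1 := by
  rw [E, lp.norm_single (by norm_num)]; simp

@[simp] lemma E_ne_zero (p : ℕ × ℤ) : E p ≠ 0 := fun h => by
  have := norm_E p; rw [h, norm_zero] at this; exact zero_ne_one this

noncomputable def sqq (q : ℂ) (n : ℕ) : ℂ :=
  ((Real.sqrt (1 - ‖q‖ ^ (2 * n)) : ℝ) : ℂ)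

lemma starA (q : ℂ) (a : H →L[ℂ] H)
    (ha : ∀ (n : ℕ) (k : ℤ), a (lp.single 2 (n + 1, k) 1)
        = ((Real.sqrt (1 - ‖q‖ ^ (2 * (n + 1))) : ℝ) : ℂ) • lp.single 2 (n, k) 1)
    (ha0 : ∀ k : ℤ, a (lp.single 2 (0, k) 1) = 0) (n : ℕ) (k : ℤ) :
    star a (E (n, k)) = sqq q (n + 1) • E (n + 1, k) := by
  apply ext_of_inner
  rintro ⟨m, l⟩
  rw [ContinuousLinearMap.star_eq_adjoint, ContinuousLinearMap.adjoint_inner_right]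
  rw [inner_smul_right, inner_EE]
  match m with
  | 0 =>
    rw [show E (0, l) = lp.single 2 (0, l) 1 from rfl, ha0]
    simp [Prod.ext_iff]
  | m + 1 =>
    rw [show E (m + 1, l) = lp.single 2 (m + 1, l) 1 from rfl, ha m l]
    rw [inner_smul_left, show (lp.single 2 (m, l) 1 : H) = E (m, l) from rfl, inner_EE]
    simp only [Prod.mk.injEq, sqq]
    by_cases hm : m = n
    · subst hm
      by_cases hk : l = k
      · subst hk; simp [Complex.conj_ofReal]
      · have hkl : ¬ k = l := fun h => hk h.symm
        simp [hkl]
    · have hnm : ¬ n = m := fun h => hm h.symm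
      simp [hnm]

lemma starG (q : ℂ) (g : H →L[ℂ] H)
    (hg : ∀ (n : ℕ) (k : ℤ), g (lp.single 2 (n, k) 1) = (conj q) ^ n • lp.single 2 (n, k + 1) 1)
    (n : ℕ) (k : ℤ) :
    star g (E (n, k)) = q ^ n • E (n, k - 1) := by
  apply ext_of_inner
  rintro ⟨m, l⟩
  rw [ContinuousLinearMap.star_eq_adjoint, ContinuousLinearMap.adjoint_inner_right]
  rw [inner_smul_right, inner_EE, show E (m, l) = lp.single 2 (m, l) 1 from rfl, hg m l,
    inner_smul_left, show (lp.single 2 (m, l + 1) 1 : H) = E (m, l + 1) from rfl, inner_EE]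
  simp only [Prod.mk.injEq, map_pow, RingHomCompTriple.comp_apply, RingHom.id_apply,
    Complex.conj_conj]
  by_cases hm : n = m
  · subst hm
    by_cases hk : k = l + 1
    · simp [hk, show k - 1 = l by omega]
    · simp [hk, show ¬(k - 1 = l) by omega]
  · simp [hm]

set_option maxHeartbeats 2000000 in
theorem stmt16 (q : ℂ) (hq0 : 0 < ‖q‖) (hq1 : ‖q‖ < 1)
    (a g : lp (fun _ : ℕ × ℤ => ℂ) 2 →L[ℂ] lp (fun _ : ℕ × ℤ => ℂ) 2)
    (ha : ∀ (n : ℕ) (k : ℤ),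
      a (lp.single 2 (n + 1, k) 1)
        = ((Real.sqrt (1 - ‖q‖ ^ (2 * (n + 1))) : ℝ) : ℂ) • lp.single 2 (n, k) 1)
    (ha0 : ∀ k : ℤ, a (lp.single 2 (0, k) 1) = 0)
    (hg : ∀ (n : ℕ) (k : ℤ),
      g (lp.single 2 (n, k) 1) = (conj q) ^ n • lp.single 2 (n, k + 1) 1) :
    LinearIndependent ℂ
      (fun ij : Fin 3 × Fin 3 => vij q a g ((ij.1 : ℤ) - 1) ((ij.2 : ℤ) - 1)) := by
  have hqne : q ≠ 0 := by simpa using hq0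
  have hcq : conj q ≠ 0 := by simpa using hqne
  have hzeta : zetaC q ≠ 0 := div_ne_zero hqne hcq
  have hsq : ∀ n : ℕ, 0 < n → sqq q n ≠ 0 := by
    intro n hn
    have h1 : ‖q‖ ^ (2 * n) < 1 :=
      pow_lt_one₀ (norm_nonneg q) hq1 (by omega)
    have : (0 : ℝ) < Real.sqrt (1 - ‖q‖ ^ (2 * n)) :=
      Real.sqrt_pos.mpr (by linarith)
    rw [sqq]
    exact_mod_cast Complex.ofReal_ne_zero.mpr this.ne'
  have hsig : sigSq q ≠ 0 := by
    have h1 : ((1 + ‖q‖ ^ 2 : ℝ) : ℂ) ≠ 0 :=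
      Complex.ofReal_ne_zero.mpr (by positivity)
    simpa [sigSq, vsig] using h1
  have hvs : vsig q ≠ 0 := pow_ne_zero _ (by exact_mod_cast hq0.ne')
  have hone : (1 : ℂ) ≠ sigSq q := by
    rw [sigSq]
    intro h
    exact hvs (left_eq_add.mp h)
  have A' : ∀ (n : ℕ) (k : ℤ), a (E (n + 1, k)) = sqq q (n + 1) • E (n, k) := ha
  have A0 : ∀ k : ℤ, a (E (0, k)) = 0 := ha0
  have G' : ∀ (n : ℕ) (k : ℤ), g (E (n, k)) = (conj q) ^ n • E (n, k + 1) := hg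
  have SA := starA q a ha ha0
  have SG := starG q g hg
  rw [Fintype.linearIndependent_iff]
  intro c h ij
  rw [Fintype.sum_prod_type] at h
  simp only [Fin.sum_univ_three] at h
  norm_num [vij] at h
  simp only [pow_two] at h
  have A2 : ∀ k, a (E (2, k)) = sqq q 2 • E (1, k) := fun k => by simpa using A' 1 k
  have A1 : ∀ k, a (E (1, k)) = sqq q 1 • E (0, k) := fun k => by simpa using A' 0 k
  have s1 := hsq 1 (by norm_num)
  have s2 := hsq 2 (by norm_num)
  have s3 := hsq 3 (by norm_num)
  have s4 := hsq 4 (by norm_num)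
  have e00 := congrArg (fun A : (lp (fun _ : ℕ × ℤ => ℂ) 2) →L[ℂ] (lp (fun _ : ℕ × ℤ => ℂ) 2) =>
    @inner ℂ _ _ (E (0, 0)) (A (E (2, 0)))) h
  simp only [ContinuousLinearMap.add_apply, ContinuousLinearMap.neg_apply,
    ContinuousLinearMap.smul_apply, ContinuousLinearMap.mul_apply, ContinuousLinearMap.sub_apply,
    ContinuousLinearMap.one_apply, ContinuousLinearMap.zero_apply, map_smul, A2, A1, A0, G', SA, SG,
    smul_smul] at e00
  norm_num [inner_add_right, inner_smul_right, inner_sub_right, inner_EE, Prod.mk.injEq, ← Prod.mk_zero_zero, ← Prod.mk_one_one,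
    pow_eq_zero_iff, s1, s2, s3, s4, hqne, hcq, hzeta, hsig, hvs, hone, sub_eq_zero] at e00
  have e01 := congrArg (fun A : (lp (fun _ : ℕ × ℤ => ℂ) 2) →L[ℂ] (lp (fun _ : ℕ × ℤ => ℂ) 2) =>
    @inner ℂ _ _ (E (1, -1)) (A (E (2, 0)))) h
  simp only [ContinuousLinearMap.add_apply, ContinuousLinearMap.neg_apply,
    ContinuousLinearMap.smul_apply, ContinuousLinearMap.mul_apply, ContinuousLinearMap.sub_apply,
    ContinuousLinearMap.one_apply, ContinuousLinearMap.zero_apply, map_smul, A2, A1, A0, G', SA, SG,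
    smul_smul] at e01
  norm_num [inner_add_right, inner_smul_right, inner_sub_right, inner_EE, Prod.mk.injEq, ← Prod.mk_zero_zero, ← Prod.mk_one_one,
    pow_eq_zero_iff, s1, s2, s3, s4, hqne, hcq, hzeta, hsig, hvs, hone, sub_eq_zero] at e01
  have e02 := congrArg (fun A : (lp (fun _ : ℕ × ℤ => ℂ) 2) →L[ℂ] (lp (fun _ : ℕ × ℤ => ℂ) 2) =>
    @inner ℂ _ _ (E (2, -2)) (A (E (2, 0)))) h
  simp only [ContinuousLinearMap.add_apply, ContinuousLinearMap.neg_apply,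
    ContinuousLinearMap.smul_apply, ContinuousLinearMap.mul_apply, ContinuousLinearMap.sub_apply,
    ContinuousLinearMap.one_apply, ContinuousLinearMap.zero_apply, map_smul, A2, A1, A0, G', SA, SG,
    smul_smul] at e02
  norm_num [inner_add_right, inner_smul_right, inner_sub_right, inner_EE, Prod.mk.injEq, ← Prod.mk_zero_zero, ← Prod.mk_one_one,
    pow_eq_zero_iff, s1, s2, s3, s4, hqne, hcq, hzeta, hsig, hvs, hone, sub_eq_zero] at e02
  have e10 := congrArg (fun A : (lp (fun _ : ℕ × ℤ => ℂ) 2) →L[ℂ] (lp (fun _ : ℕ × ℤ => ℂ) 2) =>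
    @inner ℂ _ _ (E (1, 1)) (A (E (2, 0)))) h
  simp only [ContinuousLinearMap.add_apply, ContinuousLinearMap.neg_apply,
    ContinuousLinearMap.smul_apply, ContinuousLinearMap.mul_apply, ContinuousLinearMap.sub_apply,
    ContinuousLinearMap.one_apply, ContinuousLinearMap.zero_apply, map_smul, A2, A1, A0, G', SA, SG,
    smul_smul] at e10
  norm_num [inner_add_right, inner_smul_right, inner_sub_right, inner_EE, Prod.mk.injEq, ← Prod.mk_zero_zero, ← Prod.mk_one_one,
    pow_eq_zero_iff, s1, s2, s3, s4, hqne, hcq, hzeta, hsig, hvs, hone, sub_eq_zero] at e10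
  have e12 := congrArg (fun A : (lp (fun _ : ℕ × ℤ => ℂ) 2) →L[ℂ] (lp (fun _ : ℕ × ℤ => ℂ) 2) =>
    @inner ℂ _ _ (E (3, -1)) (A (E (2, 0)))) h
  simp only [ContinuousLinearMap.add_apply, ContinuousLinearMap.neg_apply,
    ContinuousLinearMap.smul_apply, ContinuousLinearMap.mul_apply, ContinuousLinearMap.sub_apply,
    ContinuousLinearMap.one_apply, ContinuousLinearMap.zero_apply, map_smul, A2, A1, A0, G', SA, SG,
    smul_smul] at e12
  norm_num [inner_add_right, inner_smul_right, inner_sub_right, inner_EE, Prod.mk.injEq, ← Prod.mk_zero_zero, ← Prod.mk_one_one,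
    pow_eq_zero_iff, s1, s2, s3, s4, hqne, hcq, hzeta, hsig, hvs, hone, sub_eq_zero] at e12
  have e20 := congrArg (fun A : (lp (fun _ : ℕ × ℤ => ℂ) 2) →L[ℂ] (lp (fun _ : ℕ × ℤ => ℂ) 2) =>
    @inner ℂ _ _ (E (2, 2)) (A (E (2, 0)))) h
  simp only [ContinuousLinearMap.add_apply, ContinuousLinearMap.neg_apply,
    ContinuousLinearMap.smul_apply, ContinuousLinearMap.mul_apply, ContinuousLinearMap.sub_apply,
    ContinuousLinearMap.one_apply, ContinuousLinearMap.zero_apply, map_smul, A2, A1, A0, G', SA, SG,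
    smul_smul] at e20
  norm_num [inner_add_right, inner_smul_right, inner_sub_right, inner_EE, Prod.mk.injEq, ← Prod.mk_zero_zero, ← Prod.mk_one_one,
    pow_eq_zero_iff, s1, s2, s3, s4, hqne, hcq, hzeta, hsig, hvs, hone, sub_eq_zero] at e20
  have e21 := congrArg (fun A : (lp (fun _ : ℕ × ℤ => ℂ) 2) →L[ℂ] (lp (fun _ : ℕ × ℤ => ℂ) 2) =>
    @inner ℂ _ _ (E (3, 1)) (A (E (2, 0)))) h
  simp only [ContinuousLinearMap.add_apply, ContinuousLinearMap.neg_apply,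
    ContinuousLinearMap.smul_apply, ContinuousLinearMap.mul_apply, ContinuousLinearMap.sub_apply,
    ContinuousLinearMap.one_apply, ContinuousLinearMap.zero_apply, map_smul, A2, A1, A0, G', SA, SG,
    smul_smul] at e21
  norm_num [inner_add_right, inner_smul_right, inner_sub_right, inner_EE, Prod.mk.injEq, ← Prod.mk_zero_zero, ← Prod.mk_one_one,
    pow_eq_zero_iff, s1, s2, s3, s4, hqne, hcq, hzeta, hsig, hvs, hone, sub_eq_zero] at e21
  have e22 := congrArg (fun A : (lp (fun _ : ℕ × ℤ => ℂ) 2) →L[ℂ] (lp (fun _ : ℕ × ℤ => ℂ) 2) =>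
    @inner ℂ _ _ (E (4, 0)) (A (E (2, 0)))) h
  simp only [ContinuousLinearMap.add_apply, ContinuousLinearMap.neg_apply,
    ContinuousLinearMap.smul_apply, ContinuousLinearMap.mul_apply, ContinuousLinearMap.sub_apply,
    ContinuousLinearMap.one_apply, ContinuousLinearMap.zero_apply, map_smul, A2, A1, A0, G', SA, SG,
    smul_smul] at e22
  norm_num [inner_add_right, inner_smul_right, inner_sub_right, inner_EE, Prod.mk.injEq, ← Prod.mk_zero_zero, ← Prod.mk_one_one,
    pow_eq_zero_iff, s1, s2, s3, s4, hqne, hcq, hzeta, hsig, hvs, hone, sub_eq_zero] at e22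
  have e11 := congrArg (fun A : (lp (fun _ : ℕ × ℤ => ℂ) 2) →L[ℂ] (lp (fun _ : ℕ × ℤ => ℂ) 2) =>
    @inner ℂ _ _ (E (0, 0)) (A (E (0, 0)))) h
  simp only [ContinuousLinearMap.add_apply, ContinuousLinearMap.neg_apply,
    ContinuousLinearMap.smul_apply, ContinuousLinearMap.mul_apply, ContinuousLinearMap.sub_apply,
    ContinuousLinearMap.one_apply, ContinuousLinearMap.zero_apply, map_smul, A2, A1, A0, G', SA, SG,
    smul_smul] at e11
  norm_num [inner_add_right, inner_smul_right, inner_sub_right, inner_EE, Prod.mk.injEq, ← Prod.mk_zero_zero, ← Prod.mk_one_one,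
    pow_eq_zero_iff, s1, s2, s3, s4, hqne, hcq, hzeta, hsig, hvs, hone, sub_eq_zero] at e11
  fin_cases ij <;> assumption
end
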